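/- arXiv:math/0501230 — 4 statements merged into one kernel-verified Lean document; each statement's English description precedes it below -/
import Mathlib

section
/- The number of vacillating tableaux of empty shape and length 2n equals the n-th Bell number B(n). -/
/-!
Young's lattice is a differential poset: a diagram has exactly one more addable than removable
corner, so the operators summing over upper and over lower covers satisfy `DU = UD + I`. Hence
the number `f_k(μ)` of saturated chains of length `k` from `∅` to `μ` satisfies
`D f_{k+1} = (k + 1) f_k`, and induction on `n` shows that the number of vacillating walks of
length `2n` from `∅` to `μ` is `T(n, |μ|) f_{|μ|}(μ)`, where
`T(n + 1, k) = (k + 1) T(n, k) + (k + 1) T(n, k + 1) + T(n, k - 1)`.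
The sums `∑_P C(#P, k)` over set partitions `P` of `[n]` satisfy the same recurrence: a
partition of `[n + 1]` is a partition of `[n]` with `n + 1` added either as a singleton or to
one of its blocks. At `μ = ∅`, `k = 0` this gives the Bell number.
-/

/-- `ν` is obtained from `μ` by adding one square. -/
def AddOne (μ ν : YoungDiagram) : Prop := μ ≤ ν ∧ ν.card = μ.card + 1

/-- A vacillating tableau of shape `lam` and length `2n`, encoded as a function
`V : ℕ → YoungDiagram` (constant equal to `lam` from index `2n` on):
`V 0 = ∅`, `V (2n) = lam`, each odd-indexed step deletes a square or does nothing,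
and each even-indexed step adds a square or does nothing. -/
def IsVacTab (n : ℕ) (lam : YoungDiagram) (V : ℕ → YoungDiagram) : Prop :=
  V 0 = ⊥ ∧ V (2 * n) = lam ∧ (∀ k, 2 * n ≤ k → V k = lam) ∧
  (∀ i < n, V (2 * i + 1) = V (2 * i) ∨ AddOne (V (2 * i + 1)) (V (2 * i))) ∧
  (∀ i < n, V (2 * i + 2) = V (2 * i + 1) ∨ AddOne (V (2 * i + 1)) (V (2 * i + 2)))

open Finset

section YoungLattice

open scoped Classical

namespace YoungDiagram

variable {μ ν : YoungDiagram}

lemma fst_lt_card_of_mem {c : ℕ × ℕ} (h : c ∈ μ) : c.1 < μ.card :=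
  calc c.1 < μ.colLen c.2 := mem_iff_lt_colLen.mp h
    _ = #(μ.col c.2) := μ.colLen_eq_card
    _ ≤ μ.card := card_le_card (filter_subset _ _)

lemma snd_lt_card_of_mem {c : ℕ × ℕ} (h : c ∈ μ) : c.2 < μ.card :=
  calc c.2 < μ.rowLen c.1 := mem_iff_lt_rowLen.mp h
    _ = #(μ.row c.1) := μ.rowLen_eq_card
    _ ≤ μ.card := card_le_card (filter_subset _ _)

lemma finite_setOf_card_le (N : ℕ) : {ν : YoungDiagram | ν.card ≤ N}.Finite := by
  refine Set.Finite.of_finite_image (f := cells) ?_ fun _ _ _ _ h => YoungDiagram.ext h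
  refine (range N ×ˢ range N).powerset.finite_toSet.subset ?_
  rintro _ ⟨ν, hν, rfl⟩
  refine mem_coe.mpr (mem_powerset.mpr fun c hc => ?_)
  exact mem_product.mpr ⟨mem_range.mpr ((fst_lt_card_of_mem hc).trans_le hν),
    mem_range.mpr ((snd_lt_card_of_mem hc).trans_le hν)⟩

@[simp] lemma card_bot : (⊥ : YoungDiagram).card = 0 := rfl

lemma eq_of_le_of_card_le (h : μ ≤ ν) (hc : ν.card ≤ μ.card) : μ = ν :=
  YoungDiagram.ext (eq_of_subset_of_card_le h hc)

lemma card_lt_card_of_lt (h : μ < ν) : μ.card < ν.card :=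
  card_lt_card (cells_ssubset_iff.mpr h)

lemma card_sup_add_card_inf (μ ν : YoungDiagram) :
    (μ ⊔ ν).card + (μ ⊓ ν).card = μ.card + ν.card := by
  simp only [YoungDiagram.card, cells_sup, cells_inf, card_union_add_card_inter]

noncomputable def upCovers (μ : YoungDiagram) : Finset YoungDiagram :=
  ((finite_setOf_card_le (μ.card + 1)).subset (t := {ν | AddOne μ ν})
    fun _ h => h.2.le).toFinset

noncomputable def downCovers (μ : YoungDiagram) : Finset YoungDiagram :=
  ((finite_setOf_card_le μ.card).subset (t := {ρ | AddOne ρ μ})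
    fun _ h => (Nat.le_succ _).trans_eq h.2.symm).toFinset

@[simp] lemma mem_upCovers : ν ∈ upCovers μ ↔ AddOne μ ν := by simp [upCovers]

@[simp] lemma mem_downCovers : ν ∈ downCovers μ ↔ AddOne ν μ := by simp [downCovers]

def IsAddableRow (μ : YoungDiagram) (i : ℕ) : Prop := i = 0 ∨ μ.rowLen i < μ.rowLen (i - 1)

def IsRemovableRow (μ : YoungDiagram) (i : ℕ) : Prop := μ.rowLen (i + 1) < μ.rowLen i

noncomputable def addableRows (μ : YoungDiagram) : Finset ℕ :=
  (range (μ.card + 1)).filter μ.IsAddableRow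

noncomputable def removableRows (μ : YoungDiagram) : Finset ℕ :=
  (range μ.card).filter μ.IsRemovableRow

lemma lt_card_of_rowLen_pos {i : ℕ} (h : 0 < μ.rowLen i) : i < μ.card :=
  fst_lt_card_of_mem (c := (i, 0)) (mem_iff_lt_rowLen.mpr h)

lemma mem_addableRows {i : ℕ} : i ∈ μ.addableRows ↔ μ.IsAddableRow i := by
  refine mem_filter.trans ⟨And.right, fun h => ⟨mem_range.mpr ?_, h⟩⟩
  rcases h with rfl | h
  · omega
  · have := lt_card_of_rowLen_pos (h.trans_le' (Nat.zero_le _)); omega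

lemma mem_removableRows {i : ℕ} : i ∈ μ.removableRows ↔ μ.IsRemovableRow i :=
  mem_filter.trans ⟨And.right, fun h =>
    ⟨mem_range.mpr (lt_card_of_rowLen_pos (h.trans_le' (Nat.zero_le _))), h⟩⟩

-- Row `i + 1` is addable exactly when row `i` is removable, and row `0` is always addable.
lemma card_addableRows (μ : YoungDiagram) :
    #μ.addableRows = #μ.removableRows + 1 := by
  have : μ.addableRows = insert 0 (μ.removableRows.image Nat.succ) := by
    ext (_ | i) <;> simp [mem_addableRows, mem_removableRows, IsAddableRow, IsRemovableRow]
  rw [this, card_insert_of_notMem (by simp), card_image_of_injective _ Nat.succ_injective]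

def addCell (μ : YoungDiagram) (i : ℕ) (hi : μ.IsAddableRow i) : YoungDiagram where
  cells := insert (i, μ.rowLen i) μ.cells
  isLowerSet := by
    rintro ⟨c₁, c₂⟩ ⟨d₁, d₂⟩ ⟨hd₁, hd₂⟩ hc
    simp only [coe_insert, Set.mem_insert_iff, mem_coe, mem_cells, mem_iff_lt_rowLen,
      Prod.mk.injEq] at hc hd₁ hd₂ ⊢
    have := μ.rowLen_anti d₁ c₁ hd₁
    rcases hc with ⟨rfl, rfl⟩ | hc
    · rcases hd₁.lt_or_eq with hlt | rfl
      · rcases hi with rfl | hi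
        · omega
        · have := μ.rowLen_anti d₁ (c₁ - 1) (by omega); omega
      · omega
    · omega

def removeCell (μ : YoungDiagram) (i : ℕ) (hi : μ.IsRemovableRow i) : YoungDiagram where
  cells := μ.cells.erase (i, μ.rowLen i - 1)
  isLowerSet := by
    rintro ⟨c₁, c₂⟩ ⟨d₁, d₂⟩ ⟨hd₁, hd₂⟩ hc
    simp only [coe_erase, Set.mem_sdiff, mem_coe, mem_cells, mem_iff_lt_rowLen,
      Set.mem_singleton_iff, Prod.mk.injEq] at hc hd₁ hd₂ ⊢
    have := μ.rowLen_anti d₁ c₁ hd₁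
    refine ⟨by omega, ?_⟩
    rintro ⟨rfl, rfl⟩
    have := μ.rowLen_anti (d₁ + 1) c₁
    unfold IsRemovableRow at hi
    omega

@[simp] lemma cells_addCell (i : ℕ) (hi : μ.IsAddableRow i) :
    (μ.addCell i hi).cells = insert (i, μ.rowLen i) μ.cells := rfl

@[simp] lemma cells_removeCell (i : ℕ) (hi : μ.IsRemovableRow i) :
    (μ.removeCell i hi).cells = μ.cells.erase (i, μ.rowLen i - 1) := rfl

lemma addOne_addCell (i : ℕ) (hi : μ.IsAddableRow i) : AddOne μ (μ.addCell i hi) :=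
  ⟨subset_insert _ μ.cells, card_insert_of_notMem (by simp [mem_iff_lt_rowLen])⟩

lemma addOne_removeCell (i : ℕ) (hi : μ.IsRemovableRow i) : AddOne (μ.removeCell i hi) μ :=
  ⟨erase_subset _ μ.cells, (card_erase_add_one (by
    simp only [mem_cells, mem_iff_lt_rowLen]; unfold IsRemovableRow at hi; omega)).symm⟩

end YoungDiagram

namespace AddOne

open YoungDiagram

variable {μ ν : YoungDiagram}

lemma irrefl (μ : YoungDiagram) : ¬ AddOne μ μ := fun h => by have := h.2; omega

lemma exists_cells_eq_insert (h : AddOne μ ν) :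
    ∃ c ∉ μ.cells, ν.cells = insert c μ.cells := by
  have hsub : μ.cells ⊆ ν.cells := h.1
  obtain ⟨c, hc⟩ : ∃ c, ν.cells \ μ.cells = {c} := by
    rw [← card_eq_one, card_sdiff_of_subset hsub]
    exact Nat.sub_eq_of_eq_add' h.2
  refine ⟨c, (mem_sdiff.mp (hc ▸ mem_singleton_self c)).2, ?_⟩
  rw [← sdiff_union_of_subset hsub, hc, insert_eq]

lemma exists_addCell_eq (h : AddOne μ ν) : ∃ i hi, μ.addCell i hi = ν := by
  obtain ⟨⟨i, j⟩, hc, hν⟩ := h.exists_cells_eq_insert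
  have mem_ν : ∀ d : ℕ × ℕ, d ≤ (i, j) → d = (i, j) ∨ d ∈ μ := fun d hd => by
    have := ν.isLowerSet hd (by simp [← mem_cells, hν] : (i, j) ∈ ν)
    rwa [mem_coe, hν, mem_insert, mem_cells] at this
  rw [mem_cells, mem_iff_lt_rowLen, not_lt] at hc
  have hj : j = μ.rowLen i := by
    have := mem_ν (i, μ.rowLen i) ⟨le_rfl, hc⟩
    simp only [Prod.mk.injEq, true_and, mem_iff_lt_rowLen, lt_irrefl, or_false] at this
    exact this.symm
  have hi : μ.IsAddableRow i := by
    refine or_iff_not_imp_left.mpr fun hi => ?_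
    have := mem_ν (i - 1, j) ⟨Nat.sub_le i 1, le_rfl⟩
    simp only [Prod.mk.injEq, and_true, mem_iff_lt_rowLen] at this
    omega
  exact ⟨i, hi, YoungDiagram.ext (by rw [hν, hj]; rfl)⟩

lemma exists_removeCell_eq (h : AddOne ν μ) : ∃ i hi, μ.removeCell i hi = ν := by
  obtain ⟨⟨i, j⟩, hc, hμ⟩ := h.exists_cells_eq_insert
  have eq_of_le : ∀ d : ℕ × ℕ, (i, j) ≤ d → d.2 < μ.rowLen d.1 → d = (i, j) :=
    fun d hd hdμ => by
    have : d ∈ μ.cells := mem_iff_lt_rowLen.mpr hdμ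
    rw [hμ, mem_insert] at this
    exact this.resolve_right fun hdν => hc (ν.isLowerSet hd hdν)
  have hij : j < μ.rowLen i := mem_iff_lt_rowLen.mp (by simp [← mem_cells, hμ])
  have hj : j = μ.rowLen i - 1 := by
    by_contra hne
    have := eq_of_le (i, j + 1) ⟨le_rfl, Nat.le_succ j⟩ (show j + 1 < μ.rowLen i by omega)
    simp at this
  have hi : μ.IsRemovableRow i := by
    by_contra hi
    have := eq_of_le (i + 1, j) ⟨Nat.le_succ i, le_rfl⟩
      (show j < μ.rowLen (i + 1) by unfold IsRemovableRow at hi; omega)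
    simp at this
  refine ⟨i, hi, YoungDiagram.ext ?_⟩
  change μ.cells.erase _ = _
  rw [hμ, ← hj, erase_insert hc]

variable {ρ : YoungDiagram}

lemma sup_eq_and_inf_addOne (h₁ : AddOne μ ρ) (h₂ : AddOne ν ρ) (hne : μ ≠ ν) :
    μ ⊔ ν = ρ ∧ AddOne (μ ⊓ ν) μ ∧ AddOne (μ ⊓ ν) ν := by
  have hcard : μ.card = ν.card := by have := h₁.2; have := h₂.2; omega
  have hlt : μ < μ ⊔ ν := lt_of_le_of_ne le_sup_left fun h =>
    hne (eq_of_le_of_card_le (h ▸ le_sup_right) hcard.le).symm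
  have hsup : μ ⊔ ν = ρ := eq_of_le_of_card_le (sup_le h₁.1 h₂.1)
    (by have := card_lt_card_of_lt hlt; have := h₁.2; omega)
  have := card_sup_add_card_inf μ ν
  rw [hsup] at this
  have := h₁.2
  exact ⟨hsup, ⟨inf_le_left, by omega⟩, ⟨inf_le_right, by omega⟩⟩

lemma inf_eq_and_addOne_sup (h₁ : AddOne ρ μ) (h₂ : AddOne ρ ν) (hne : μ ≠ ν) :
    μ ⊓ ν = ρ ∧ AddOne μ (μ ⊔ ν) ∧ AddOne ν (μ ⊔ ν) := by
  have hcard : μ.card = ν.card := by have := h₁.2; have := h₂.2; omega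
  have hlt : μ ⊓ ν < μ := lt_of_le_of_ne inf_le_left fun h =>
    hne (eq_of_le_of_card_le (h ▸ inf_le_right) hcard.ge)
  have hinf : μ ⊓ ν = ρ := (eq_of_le_of_card_le (le_inf h₁.1 h₂.1)
    (by have := card_lt_card_of_lt hlt; have := h₁.2; omega)).symm
  have := card_sup_add_card_inf μ ν
  rw [hinf] at this
  have := h₁.2
  exact ⟨hinf, ⟨le_sup_left, by omega⟩, ⟨le_sup_right, by omega⟩⟩

end AddOne

namespace YoungDiagram

variable {μ : YoungDiagram}

lemma card_upCovers_eq_card_addableRows (μ : YoungDiagram) :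
    #μ.upCovers = #μ.addableRows := by
  symm
  refine card_bij (fun i hi => μ.addCell i (mem_addableRows.mp hi))
    (fun i _ => mem_upCovers.mpr (addOne_addCell i _)) (fun i₁ _ i₂ h₂ h => ?_)
    (fun ν hν => ?_)
  · have : (i₁, μ.rowLen i₁) ∈ insert (i₂, μ.rowLen i₂) μ.cells := by
      rw [← cells_addCell i₂ (mem_addableRows.mp h₂), ← h, cells_addCell]
      exact mem_insert_self _ _
    simp only [mem_insert, Prod.mk.injEq, mem_cells, mem_iff_lt_rowLen, lt_irrefl,
      or_false] at this
    exact this.1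
  · obtain ⟨i, hi, rfl⟩ := AddOne.exists_addCell_eq (mem_upCovers.mp hν)
    exact ⟨i, mem_addableRows.mpr hi, rfl⟩

lemma card_downCovers_eq_card_removableRows (μ : YoungDiagram) :
    #μ.downCovers = #μ.removableRows := by
  symm
  refine card_bij (fun i hi => μ.removeCell i (mem_removableRows.mp hi))
    (fun i _ => mem_downCovers.mpr (addOne_removeCell i _)) (fun i₁ h₁ i₂ h₂ h => ?_)
    (fun ν hν => ?_)
  · by_contra hne
    have h₁ := mem_removableRows.mp h₁
    have : (i₁, μ.rowLen i₁ - 1) ∈ μ.cells.erase (i₂, μ.rowLen i₂ - 1) := by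
      simp only [mem_erase, ne_eq, Prod.mk.injEq, hne, false_and, not_false_eq_true, mem_cells,
        mem_iff_lt_rowLen, true_and]
      unfold IsRemovableRow at h₁
      omega
    rw [← cells_removeCell i₂ (mem_removableRows.mp h₂), ← h, cells_removeCell] at this
    exact notMem_erase _ μ.cells this
  · obtain ⟨i, hi, rfl⟩ := AddOne.exists_removeCell_eq (mem_downCovers.mp hν)
    exact ⟨i, mem_removableRows.mpr hi, rfl⟩

lemma card_upCovers (μ : YoungDiagram) : #μ.upCovers = #μ.downCovers + 1 := by
  rw [card_upCovers_eq_card_addableRows, card_downCovers_eq_card_removableRows,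
    card_addableRows]

noncomputable def upSum (f : YoungDiagram → ℕ) (μ : YoungDiagram) : ℕ :=
  ∑ ν ∈ μ.upCovers, f ν

noncomputable def downSum (f : YoungDiagram → ℕ) (μ : YoungDiagram) : ℕ :=
  ∑ ν ∈ μ.downCovers, f ν

/- Both sides run over the pairs `(ρ, σ)`, `σ ≠ μ`, joined to `μ` through `ρ`; they are matched
by replacing `ρ` with `μ ⊓ σ`, resp. `μ ⊔ σ`. -/
lemma sum_upCovers_sum_erase_eq_sum_downCovers_sum_erase (f : YoungDiagram → ℕ)
    (μ : YoungDiagram) :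
    ∑ ρ ∈ μ.upCovers, ∑ σ ∈ ρ.downCovers.erase μ, f σ
      = ∑ ρ ∈ μ.downCovers, ∑ σ ∈ ρ.upCovers.erase μ, f σ := by
  rw [sum_sigma', sum_sigma']
  refine sum_nbij' (fun p => ⟨μ ⊓ p.2, p.2⟩) (fun p => ⟨μ ⊔ p.2, p.2⟩) ?_ ?_ ?_ ?_
    fun _ _ => rfl
  all_goals
    rintro ⟨ρ, σ⟩ hp
    simp only [mem_sigma, mem_upCovers, mem_downCovers, mem_erase] at hp
    obtain ⟨h₁, hne, h₂⟩ := hp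
  · obtain ⟨-, hμ, hσ⟩ := AddOne.sup_eq_and_inf_addOne h₁ h₂ (Ne.symm hne)
    simpa using ⟨hμ, hne, hσ⟩
  · obtain ⟨-, hμ, hσ⟩ := AddOne.inf_eq_and_addOne_sup h₁ h₂ (Ne.symm hne)
    simpa using ⟨hμ, hne, hσ⟩
  · simpa using (AddOne.sup_eq_and_inf_addOne h₁ h₂ (Ne.symm hne)).1
  · simpa using (AddOne.inf_eq_and_addOne_sup h₁ h₂ (Ne.symm hne)).1

lemma upSum_downSum (f : YoungDiagram → ℕ) (μ : YoungDiagram) :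
    upSum (downSum f) μ = downSum (upSum f) μ + f μ := by
  have hL : upSum (downSum f) μ
      = #μ.upCovers * f μ + ∑ ρ ∈ μ.upCovers, ∑ σ ∈ ρ.downCovers.erase μ, f σ := by
    rw [upSum, ← smul_eq_mul, ← sum_const, ← sum_add_distrib]
    exact sum_congr rfl fun ρ hρ =>
      (add_sum_erase _ f (mem_downCovers.mpr (mem_upCovers.mp hρ))).symm
  have hR : downSum (upSum f) μ
      = #μ.downCovers * f μ + ∑ ρ ∈ μ.downCovers, ∑ σ ∈ ρ.upCovers.erase μ, f σ := by
    rw [downSum, ← smul_eq_mul, ← sum_const, ← sum_add_distrib]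
    exact sum_congr rfl fun ρ hρ =>
      (add_sum_erase _ f (mem_upCovers.mpr (mem_downCovers.mp hρ))).symm
  rw [hL, hR, sum_upCovers_sum_erase_eq_sum_downCovers_sum_erase, card_upCovers]
  ring

noncomputable def chainCount : ℕ → YoungDiagram → ℕ
  | 0 => fun μ => if μ = ⊥ then 1 else 0
  | k + 1 => downSum (chainCount k)

lemma chainCount_zero_bot : chainCount 0 ⊥ = 1 := if_pos rfl

lemma chainCount_zero_of_ne_bot {μ : YoungDiagram} (h : μ ≠ ⊥) : chainCount 0 μ = 0 :=
  if_neg h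

lemma upSum_chainCount_zero (μ : YoungDiagram) : upSum (chainCount 0) μ = 0 :=
  sum_eq_zero fun ν hν => if_neg fun h => by
    have := (mem_upCovers.mp hν).2
    rw [h, card_bot] at this
    omega

lemma upSum_chainCount_succ (k : ℕ) (μ : YoungDiagram) :
    upSum (chainCount (k + 1)) μ = (k + 1) * chainCount k μ := by
  induction k generalizing μ with
  | zero =>
    change upSum (downSum (chainCount 0)) μ = 1 * chainCount 0 μ
    rw [upSum_downSum, downSum, sum_congr rfl fun ρ _ => upSum_chainCount_zero ρ,
      sum_const_zero, zero_add, one_mul]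
  | succ k ih =>
    change upSum (downSum (chainCount (k + 1))) μ = (k + 2) * downSum (chainCount k) μ
    rw [upSum_downSum, downSum, sum_congr rfl fun ρ _ => ih ρ, ← mul_sum]
    change (k + 1) * downSum (chainCount k) μ + downSum (chainCount k) μ = _
    ring

end YoungDiagram

/-- The number of set partitions of `[n]` with `k` marked blocks
(see `sum_choose_card_parts_Icc`). -/
def markedBell : ℕ → ℕ → ℕ
  | 0, k => if k = 0 then 1 else 0
  | n + 1, k => (k + 1) * markedBell n k + (k + 1) * markedBell n (k + 1) +
      if k = 0 then 0 else markedBell n (k - 1)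

open YoungDiagram

def VacStep (i : ℕ) (μ ν : YoungDiagram) : Prop :=
  if Even i then ν = μ ∨ AddOne ν μ else ν = μ ∨ AddOne μ ν

def IsVacWalk (m : ℕ) (μ : YoungDiagram) (V : ℕ → YoungDiagram) : Prop :=
  V 0 = ⊥ ∧ (∀ k, m ≤ k → V k = μ) ∧ ∀ i < m, VacStep i (V i) (V (i + 1))

lemma isVacTab_iff_isVacWalk (n : ℕ) (V : ℕ → YoungDiagram) :
    IsVacTab n ⊥ V ↔ IsVacWalk (2 * n) ⊥ V := by
  have even_step : ∀ i, VacStep (2 * i) (V (2 * i)) (V (2 * i + 1)) ↔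
      V (2 * i + 1) = V (2 * i) ∨ AddOne (V (2 * i + 1)) (V (2 * i)) := fun i => by
    simp [VacStep]
  have odd_step : ∀ i, VacStep (2 * i + 1) (V (2 * i + 1)) (V (2 * i + 2)) ↔
      V (2 * i + 2) = V (2 * i + 1) ∨ AddOne (V (2 * i + 1)) (V (2 * i + 2)) := fun i => by
    simp [VacStep, parity_simps]
  refine ⟨fun ⟨h₀, _, htail, hdel, hadd⟩ => ⟨h₀, htail, fun i hi => ?_⟩,
    fun ⟨h₀, htail, hstep⟩ =>
      ⟨h₀, htail _ le_rfl, htail, fun i hi => ?_, fun i hi => ?_⟩⟩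
  · obtain ⟨j, rfl | rfl⟩ := Nat.even_or_odd' i
    · exact (even_step j).mpr (hdel j (by omega))
    · exact (odd_step j).mpr (hadd j (by omega))
  · exact (even_step i).mp (hstep _ (by omega))
  · exact (odd_step i).mp (hstep _ (by omega))

noncomputable def vacWalkCount (m : ℕ) (μ : YoungDiagram) : ℕ :=
  Nat.card {V // IsVacWalk m μ V}

noncomputable def vacPreds (i : ℕ) (μ : YoungDiagram) : Finset YoungDiagram :=
  if Even i then insert μ μ.upCovers else insert μ μ.downCovers

lemma mem_vacPreds {i : ℕ} {μ ρ : YoungDiagram} : ρ ∈ vacPreds i μ ↔ VacStep i ρ μ := by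
  unfold vacPreds VacStep
  split_ifs <;> simp [eq_comm]

def vacWalkSuccEquiv (m : ℕ) (μ : YoungDiagram) :
    {V // IsVacWalk (m + 1) μ V} ≃ Σ ρ : vacPreds m μ, {W // IsVacWalk m ρ W} where
  toFun V := ⟨⟨V.1 m, mem_vacPreds.mpr <| by
      simpa [V.2.2.1 (m + 1) le_rfl] using V.2.2.2 m m.lt_succ_self⟩,
    fun k => V.1 (min k m), by
      obtain ⟨V, h₀, htail, hstep⟩ := V
      refine ⟨by simpa using h₀, fun k hk => by simp [hk], fun i hi => ?_⟩
      simpa [Nat.min_eq_left hi.le, Nat.min_eq_left hi] using hstep i (by omega)⟩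
  invFun W := ⟨fun k => if m < k then μ else W.2.1 k, by
    obtain ⟨⟨ρ, hρ⟩, W, h₀, htail, hstep⟩ := W
    refine ⟨by simpa using h₀, fun k hk => if_pos hk, fun i hi => ?_⟩
    rcases (Nat.lt_succ_iff.mp hi).lt_or_eq with hi | rfl
    · simpa [hi.not_gt, Nat.not_lt.mpr hi] using hstep i hi
    · simpa [htail i le_rfl] using mem_vacPreds.mp hρ⟩
  left_inv V := Subtype.ext <| funext fun k => by
    by_cases hk : m < k
    · simpa [hk] using (V.2.2.1 k hk).symm
    · simp [hk, Nat.min_eq_left (Nat.not_lt.mp hk)]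
  right_inv W := Sigma.subtype_ext (Subtype.ext (by simpa using W.2.2.2.1 m le_rfl)) <|
    funext fun k => by
      by_cases hk : k ≤ m
      · simp [hk]
      · simp [Nat.min_eq_right (Nat.le_of_not_le hk), W.2.2.2.1 m le_rfl,
          W.2.2.2.1 k (by omega)]

instance finite_isVacWalk (m : ℕ) (μ : YoungDiagram) : Finite {V // IsVacWalk m μ V} := by
  induction m generalizing μ with
  | zero =>
    have : Subsingleton {V // IsVacWalk 0 μ V} := ⟨fun V W => Subtype.ext <| funext fun k =>
      (V.2.2.1 k k.zero_le).trans (W.2.2.1 k k.zero_le).symm⟩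
    infer_instance
  | succ m ih => exact Finite.of_equiv _ (vacWalkSuccEquiv m μ).symm

lemma vacWalkCount_zero (μ : YoungDiagram) : vacWalkCount 0 μ = chainCount 0 μ := by
  by_cases hμ : μ = ⊥
  · subst hμ
    have : Unique {V // IsVacWalk 0 ⊥ V} :=
      { default := ⟨fun _ => ⊥, rfl, fun _ _ => rfl, fun _ h => absurd h (Nat.not_lt_zero _)⟩
        uniq := fun V => Subtype.ext <| funext fun k => V.2.2.1 k k.zero_le }
    rw [vacWalkCount, Nat.card_unique, chainCount_zero_bot]
  · have : IsEmpty {V // IsVacWalk 0 μ V} :=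
      ⟨fun V => hμ ((V.2.2.1 0 le_rfl).symm.trans V.2.1)⟩
    rw [vacWalkCount, Nat.card_of_isEmpty, chainCount_zero_of_ne_bot hμ]

lemma vacWalkCount_succ (m : ℕ) (μ : YoungDiagram) :
    vacWalkCount (m + 1) μ = ∑ ρ ∈ vacPreds m μ, vacWalkCount m ρ := by
  rw [vacWalkCount, Nat.card_congr (vacWalkSuccEquiv m μ), Nat.card_sigma]
  exact sum_coe_sort (vacPreds m μ) fun ρ => vacWalkCount m ρ

lemma vacWalkCount_succ_of_even {m : ℕ} (hm : Even m) (μ : YoungDiagram) :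
    vacWalkCount (m + 1) μ = vacWalkCount m μ + upSum (vacWalkCount m) μ := by
  rw [vacWalkCount_succ, vacPreds, if_pos hm,
    sum_insert fun h => AddOne.irrefl μ (mem_upCovers.mp h), upSum]

lemma vacWalkCount_succ_of_odd {m : ℕ} (hm : ¬ Even m) (μ : YoungDiagram) :
    vacWalkCount (m + 1) μ = vacWalkCount m μ + downSum (vacWalkCount m) μ := by
  rw [vacWalkCount_succ, vacPreds, if_neg hm,
    sum_insert fun h => AddOne.irrefl μ (mem_downCovers.mp h), downSum]

variable {n : ℕ}

lemma vacWalkCount_two_mul_add_one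
    (h : ∀ μ : YoungDiagram,
      vacWalkCount (2 * n) μ = markedBell n μ.card * chainCount μ.card μ)
    (μ : YoungDiagram) :
    vacWalkCount (2 * n + 1) μ = (markedBell n μ.card + (μ.card + 1) * markedBell n (μ.card + 1))
      * chainCount μ.card μ := by
  have hup : upSum (vacWalkCount (2 * n)) μ
      = markedBell n (μ.card + 1) * upSum (chainCount (μ.card + 1)) μ := by
    rw [upSum, upSum, mul_sum]
    refine sum_congr rfl fun ν hν => ?_
    rw [h ν, (mem_upCovers.mp hν).2]
  rw [vacWalkCount_succ_of_even (even_two_mul n), hup, upSum_chainCount_succ, h]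
  ring

lemma vacWalkCount_two_mul_add_two
    (h : ∀ μ : YoungDiagram, vacWalkCount (2 * n + 1) μ
      = (markedBell n μ.card + (μ.card + 1) * markedBell n (μ.card + 1)) * chainCount μ.card μ)
    (μ : YoungDiagram) :
    vacWalkCount (2 * n + 2) μ = markedBell (n + 1) μ.card * chainCount μ.card μ := by
  rw [vacWalkCount_succ_of_odd (by simp [parity_simps]), h]
  rcases hμ : μ.card with _ | K
  · have : μ.downCovers = ∅ := eq_empty_of_forall_notMem fun ρ hρ => by
      have := (mem_downCovers.mp hρ).2
      omega
    rw [downSum, this, sum_empty, markedBell]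
    simp
  · have hdown : downSum (vacWalkCount (2 * n + 1)) μ
        = (markedBell n K + (K + 1) * markedBell n (K + 1)) * chainCount (K + 1) μ := by
      rw [downSum, chainCount, downSum, mul_sum]
      refine sum_congr rfl fun ρ hρ => ?_
      rw [h ρ, show ρ.card = K by have := (mem_downCovers.mp hρ).2; omega]
    rw [hdown, markedBell, if_neg K.succ_ne_zero, Nat.add_sub_cancel]
    ring

lemma vacWalkCount_two_mul (n : ℕ) (μ : YoungDiagram) :
    vacWalkCount (2 * n) μ = markedBell n μ.card * chainCount μ.card μ := by
  induction n generalizing μ with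
  | zero =>
    rw [mul_zero, vacWalkCount_zero]
    by_cases hμ : μ = ⊥
    · simp [hμ, markedBell, chainCount_zero_bot]
    · rw [chainCount_zero_of_ne_bot hμ]
      rcases Nat.eq_zero_or_pos μ.card with h | h
      · rw [h, chainCount_zero_of_ne_bot hμ, mul_zero]
      · simp [markedBell, h.ne']
  | succ n ih =>
    exact vacWalkCount_two_mul_add_two (vacWalkCount_two_mul_add_one ih) μ

lemma card_isVacTab_bot (n : ℕ) : Nat.card {V // IsVacTab n ⊥ V} = markedBell n 0 := by
  rw [← Nat.card_congr (Equiv.subtypeEquivRight (isVacTab_iff_isVacWalk n)).symm,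
    ← vacWalkCount, vacWalkCount_two_mul, card_bot, chainCount_zero_bot, mul_one]

end YoungLattice

namespace Finpartition

variable {α : Type*} [DecidableEq α] {s : Finset α} {a : α}

lemma notMem_of_mem_parts (ha : a ∉ s) {P : Finpartition s} {t : Finset α} (ht : t ∈ P.parts) :
    a ∉ t :=
  fun h => ha (P.le ht h)

lemma parts_avoid_of_mem {P : Finpartition s} {t : Finset α} (ht : t ∈ P.parts) :
    (P.avoid t).parts = P.parts.erase t := by
  ext c
  rw [mem_avoid, mem_erase]
  constructor
  · rintro ⟨d, hd, hdt, rfl⟩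
    have hne : d ≠ t := fun h => hdt h.le
    have hdisj : Disjoint d t := P.disjoint hd ht hne
    rw [hdisj.sdiff_eq_left]
    exact ⟨hne, hd⟩
  · rintro ⟨hct, hc⟩
    have hdisj : Disjoint c t := P.disjoint hc ht hct
    exact ⟨c, hc, fun hle => P.ne_bot hc (hdisj.eq_bot_of_le hle),
      sdiff_eq_self_of_disjoint hdisj⟩

def erasePoint (ha : a ∉ s) (P : Finpartition (insert a s)) : Finpartition s :=
  (P.avoid {a}).copy (by rw [sdiff_singleton_eq_erase, erase_insert ha])

def insertSingleton (ha : a ∉ s) (P : Finpartition s) : Finpartition (insert a s) :=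
  P.extend (b := {a}) (singleton_ne_empty a) (disjoint_singleton_right.mpr ha)
    (by rw [sup_eq_union, union_comm, ← insert_eq])

def insertIntoPart (ha : a ∉ s) (P : Finpartition s) {t : Finset α} (ht : t ∈ P.parts) :
    Finpartition (insert a s) :=
  (P.avoid t).extend (b := insert a t) (insert_ne_empty a t)
    (disjoint_insert_right.mpr ⟨fun h => ha (mem_sdiff.mp h).1, sdiff_disjoint⟩)
    (by rw [sup_eq_union, union_insert, sdiff_union_of_subset (P.le ht)])

lemma mem_parts_erasePoint (ha : a ∉ s) {P : Finpartition (insert a s)} {t : Finset α} :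
    t ∈ (P.erasePoint ha).parts ↔
      (t ∈ P.parts ∧ t ≠ P.part a) ∨ (P.part a ≠ {a} ∧ t = (P.part a).erase a) := by
  have hpart : P.part a ∈ P.parts := P.part_mem.mpr (mem_insert_self a s)
  have ha_part : a ∈ P.part a := P.mem_part_self.mpr (mem_insert_self a s)
  change t ∈ (P.avoid {a}).parts ↔ _
  simp only [mem_avoid, subset_singleton_iff, sdiff_singleton_eq_erase]
  constructor
  · rintro ⟨d, hd, hda, rfl⟩
    by_cases hdp : d = P.part a
    · subst hdp
      exact Or.inr ⟨fun h => hda (Or.inr h), rfl⟩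
    · have had : a ∉ d := fun h => hdp (P.eq_of_mem_parts hd hpart h ha_part)
      rw [erase_eq_of_notMem had]
      exact Or.inl ⟨hd, hdp⟩
  · rintro (⟨ht, htp⟩ | ⟨hne, rfl⟩)
    · have hat : a ∉ t := fun h => htp (P.eq_of_mem_parts ht hpart h ha_part)
      refine ⟨t, ht, ?_, erase_eq_of_notMem hat⟩
      rintro (rfl | rfl)
      · exact P.empty_notMem_parts ht
      · exact hat (mem_singleton_self a)
    · refine ⟨P.part a, hpart, ?_, rfl⟩
      rintro (h | h)
      · exact P.empty_notMem_parts (h ▸ hpart)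
      · exact hne h

lemma insert_ne_singleton_of_mem_parts (ha : a ∉ s) {P : Finpartition s} {t : Finset α}
    (ht : t ∈ P.parts) : insert a t ≠ {a} := fun h => by
  have := erase_insert (notMem_of_mem_parts ha ht)
  rw [h, erase_singleton] at this
  exact P.ne_bot ht this.symm

lemma parts_insertSingleton (ha : a ∉ s) (P : Finpartition s) :
    (P.insertSingleton ha).parts = insert {a} P.parts := rfl

lemma part_insertSingleton (ha : a ∉ s) (P : Finpartition s) :
    (P.insertSingleton ha).part a = {a} :=
  part_eq_of_mem _ (by rw [parts_insertSingleton]; exact mem_insert_self _ _)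
    (mem_singleton_self a)

lemma card_parts_insertSingleton (ha : a ∉ s) (P : Finpartition s) :
    #(P.insertSingleton ha).parts = #P.parts + 1 :=
  card_extend _ _ _

lemma parts_insertIntoPart (ha : a ∉ s) (P : Finpartition s) {t : Finset α}
    (ht : t ∈ P.parts) :
    (P.insertIntoPart ha ht).parts = insert (insert a t) (P.parts.erase t) := by
  rw [insertIntoPart, extend_parts, parts_avoid_of_mem ht]

lemma part_insertIntoPart (ha : a ∉ s) (P : Finpartition s) {t : Finset α} (ht : t ∈ P.parts) :
    (P.insertIntoPart ha ht).part a = insert a t :=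
  part_eq_of_mem _ (by rw [parts_insertIntoPart]; exact mem_insert_self _ _) (mem_insert_self a t)

lemma card_parts_insertIntoPart (ha : a ∉ s) (P : Finpartition s) {t : Finset α}
    (ht : t ∈ P.parts) :
    #(P.insertIntoPart ha ht).parts = #P.parts := by
  rw [insertIntoPart, card_extend, parts_avoid_of_mem ht, card_erase_add_one ht]

lemma erasePoint_insertSingleton (ha : a ∉ s) (P : Finpartition s) :
    (P.insertSingleton ha).erasePoint ha = P := by
  ext t
  rw [mem_parts_erasePoint, part_insertSingleton, parts_insertSingleton, mem_insert]
  simp only [ne_eq, not_true_eq_false, false_and, or_false]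
  refine ⟨fun ⟨h, hne⟩ => h.resolve_left hne, fun h => ⟨Or.inr h, ?_⟩⟩
  rintro rfl
  exact notMem_of_mem_parts ha h (mem_singleton_self a)

lemma insertSingleton_erasePoint (ha : a ∉ s) {P : Finpartition (insert a s)}
    (h : P.part a = {a}) :
    (P.erasePoint ha).insertSingleton ha = P := by
  ext t
  rw [parts_insertSingleton, mem_insert, mem_parts_erasePoint, h]
  simp only [ne_eq, not_true_eq_false, false_and, or_false]
  refine ⟨?_, fun ht => (em (t = {a})).imp_right fun hta => ⟨ht, hta⟩⟩
  rintro (rfl | ⟨ht, -⟩)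
  · exact h ▸ P.part_mem.mpr (mem_insert_self a s)
  · exact ht

lemma erasePoint_insertIntoPart (ha : a ∉ s) (P : Finpartition s) {t : Finset α}
    (ht : t ∈ P.parts) :
    (P.insertIntoPart ha ht).erasePoint ha = P := by
  have hat : a ∉ t := notMem_of_mem_parts ha ht
  ext c
  rw [mem_parts_erasePoint, part_insertIntoPart, parts_insertIntoPart, erase_insert hat,
    mem_insert, mem_erase]
  constructor
  · rintro (⟨hc | ⟨-, hc⟩, hne⟩ | ⟨-, rfl⟩)
    · exact absurd hc hne
    · exact hc
    · exact ht
  · intro hc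
    by_cases hct : c = t
    · subst hct
      exact Or.inr ⟨insert_ne_singleton_of_mem_parts ha hc, rfl⟩
    · exact Or.inl ⟨Or.inr ⟨hct, hc⟩,
        fun h => notMem_of_mem_parts ha hc (h ▸ mem_insert_self a t)⟩

lemma erase_part_mem_parts_erasePoint (ha : a ∉ s) {P : Finpartition (insert a s)}
    (h : P.part a ≠ {a}) :
    (P.part a).erase a ∈ (P.erasePoint ha).parts :=
  (mem_parts_erasePoint ha).mpr (Or.inr ⟨h, rfl⟩)

lemma insertIntoPart_erasePoint (ha : a ∉ s) {P : Finpartition (insert a s)}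
    (h : P.part a ≠ {a}) :
    (P.erasePoint ha).insertIntoPart ha (erase_part_mem_parts_erasePoint ha h) = P := by
  have ha_part : a ∈ P.part a := P.mem_part_self.mpr (mem_insert_self a s)
  have hpart : P.part a ∈ P.parts := P.part_mem.mpr (mem_insert_self a s)
  ext c
  rw [parts_insertIntoPart, insert_erase ha_part, mem_insert, mem_erase, mem_parts_erasePoint]
  constructor
  · rintro (rfl | ⟨hne, ⟨hc, -⟩ | ⟨-, hc⟩⟩)
    · exact hpart
    · exact hc
    · exact absurd hc hne
  · intro hc
    refine or_iff_not_imp_left.mpr fun hcp => ⟨fun hc' => ?_, Or.inl ⟨hc, hcp⟩⟩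
    obtain ⟨x, hx⟩ := P.nonempty_of_mem_parts hc
    exact hcp (P.eq_of_mem_parts hc hpart hx (mem_of_mem_erase (hc' ▸ hx)))

def equivPartEqSingleton (ha : a ∉ s) :
    {P : Finpartition (insert a s) // P.part a = {a}} ≃ Finpartition s where
  toFun P := P.1.erasePoint ha
  invFun P := ⟨P.insertSingleton ha, part_insertSingleton ha P⟩
  left_inv P := Subtype.ext (insertSingleton_erasePoint ha P.2)
  right_inv := erasePoint_insertSingleton ha

def equivPartNeSingleton (ha : a ∉ s) :
    {P : Finpartition (insert a s) // P.part a ≠ {a}} ≃ Σ P : Finpartition s, P.parts where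
  toFun P := ⟨P.1.erasePoint ha, (P.1.part a).erase a, erase_part_mem_parts_erasePoint ha P.2⟩
  invFun P := ⟨P.1.insertIntoPart ha P.2.2, by
    rw [part_insertIntoPart]
    exact insert_ne_singleton_of_mem_parts ha P.2.2⟩
  left_inv P := Subtype.ext (insertIntoPart_erasePoint ha P.2)
  right_inv P := Sigma.subtype_ext (erasePoint_insertIntoPart ha P.1 P.2.2) <| by
    simp [part_insertIntoPart, erase_insert (notMem_of_mem_parts ha P.2.2)]

lemma sum_comp_card_parts_insert (ha : a ∉ s) {M : Type*} [AddCommMonoid M] (g : ℕ → M) :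
    ∑ Q : Finpartition (insert a s), g #Q.parts
      = ∑ P : Finpartition s, (g (#P.parts + 1) + #P.parts • g #P.parts) := by
  rw [← (Equiv.sumCompl fun Q : Finpartition (insert a s) => Q.part a = {a}).sum_comp,
    Fintype.sum_sum_type, ← (equivPartEqSingleton ha).symm.sum_comp,
    ← (equivPartNeSingleton ha).symm.sum_comp, Fintype.sum_sigma, sum_add_distrib]
  congr 1
  · simp [equivPartEqSingleton, card_parts_insertSingleton]
  · simp [equivPartNeSingleton, card_parts_insertIntoPart]

end Finpartition

lemma Nat.mul_choose_eq (m k : ℕ) :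
    m * m.choose k = k * m.choose k + (k + 1) * m.choose (k + 1) := by
  rcases le_or_gt k m with hk | hk
  · obtain ⟨d, rfl⟩ := Nat.exists_eq_add_of_le hk
    rw [mul_comm (k + 1), Nat.choose_succ_right_eq, Nat.add_sub_cancel_left]
    ring
  · simp [Nat.choose_eq_zero_of_lt hk, Nat.choose_eq_zero_of_lt (hk.trans k.lt_succ_self)]

lemma Nat.choose_succ_add_mul_choose (m k : ℕ) :
    (m + 1).choose k + m * m.choose k
      = (k + 1) * m.choose k + (k + 1) * m.choose (k + 1) +
        if k = 0 then 0 else m.choose (k - 1) := by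
  rcases k with _ | j
  · simp
  · rw [Nat.choose_succ_succ', Nat.mul_choose_eq, if_neg j.succ_ne_zero, Nat.add_sub_cancel]
    ring

lemma sum_choose_card_parts_Icc (n k : ℕ) :
    ∑ P : Finpartition (Icc 1 n), (#P.parts).choose k = markedBell n k := by
  induction n generalizing k with
  | zero =>
    have hparts (P : Finpartition (Icc 1 0)) : P.parts = ∅ := P.parts_eq_empty_iff.mpr rfl
    have hcard : Fintype.card (Finpartition (Icc 1 0)) = 1 :=
      Fintype.card_eq_one_iff.mpr ⟨⊥, fun P => Finpartition.ext (by rw [hparts, hparts])⟩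
    simp only [hparts, card_empty, sum_const, card_univ, hcard, one_smul]
    cases k <;> simp [markedBell]
  | succ n ih =>
    rw [← insert_Icc_right_eq_Icc_add_one (by omega),
      Finpartition.sum_comp_card_parts_insert (by simp) fun m => m.choose k]
    simp only [smul_eq_mul, Nat.choose_succ_add_mul_choose, sum_add_distrib, ← mul_sum, ih,
      markedBell]
    split_ifs <;> simp only [sum_const_zero, ih]

/-- The number of vacillating tableaux of empty shape and length `2n` equals the
`n`-th Bell number, i.e. the number of set partitions of `[n]`. -/
theorem stmt6 (n : ℕ) :
    Nat.card {V : ℕ → YoungDiagram // IsVacTab n ⊥ V} =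
    Nat.card (Finpartition (Finset.Icc 1 n)) := by
  rw [card_isVacTab_bot, ← sum_choose_card_parts_Icc, Nat.card_eq_fintype_card]
  simp only [Nat.choose_zero_right, sum_const, card_univ, smul_eq_mul, mul_one]
end

section
/- Let w be a sequence of n distinct integers and let λ be the common shape of the insertion and recording tableaux obtained by applying the RSK algorithm to w. Then the length of the longest increasing subsequence of w equals λ_1, and the length of the longest decreasing subsequence of w equals the number of rows of λ (i.e., λ'_1). -/
/-- RSK row insertion of `x` into a row: returns the new row and the bumped entry. -/
def rowInsert : List ℕ → ℕ → List ℕ × Option ℕ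
  | [], x => ([x], none)
  | y :: ys, x =>
      if x < y then (x :: ys, some y)
      else
        let p := rowInsert ys x
        (y :: p.1, p.2)

/-- RSK insertion of `x` into a tableau (list of rows). -/
def tabInsert : List (List ℕ) → ℕ → List (List ℕ)
  | [], x => [[x]]
  | r :: rs, x =>
      match rowInsert r x with
      | (r', none) => r' :: rs
      | (r', some b) => r' :: tabInsert rs b

/-- The RSK insertion tableau of a word `w`. -/
def insTab (w : List ℕ) : List (List ℕ) := w.foldl tabInsert []

/-!
The first row of the insertion tableau is built by patience sorting: after inserting a prefix `p`,
its entry in position `i` is the least last entry of an increasing sublist of `p` of length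
`i + 1`, so its length is the length of the longest increasing sublist of `p`.

Inserting `x` into a row `a ++ y :: b` that bumps `y` turns the word `a ++ y :: b ++ [x]` into
`y :: (a ++ x :: b)` by Knuth transformations `y z x ↦ y x z`, `x z y ↦ z x y` (`x < y < z`),
so `w` transforms into the row word of its insertion tableau, read from the last row up. Knuth
transformations preserve the lengths of decreasing sublists. In the row word a decreasing sublist
takes at most one entry from each (increasing) row, and the first column, read upwards, is a
decreasing sublist with one entry per row.
-/

namespace Schensted

open List Relation

def sublistLengths {α : Type*} (R : α → α → Prop) (w : List α) : Set ℕ :=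
  {k | ∃ s : List α, s.Sublist w ∧ s.Pairwise R ∧ s.length = k}

/-! ### Row insertion -/

lemma rowInsert_perm (r : List ℕ) (x : ℕ) :
    (rowInsert r x).1 ++ (rowInsert r x).2.toList ~ x :: r := by
  induction r with
  | nil => simp [rowInsert]
  | cons y ys ih =>
    unfold rowInsert
    split_ifs
    · simp
    · simpa using (ih.cons y).trans (Perm.swap x y ys)

lemma rowInsert_fst_headD (r : List ℕ) (x : ℕ) :
    (rowInsert r x).1.headD 0 = min (r.headD x) x := by
  cases r with
  | nil => simp [rowInsert]
  | cons y ys => unfold rowInsert; split_ifs <;> simp only [headD_cons] <;> omega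

lemma exists_rowInsert_fst_getElem? {r : List ℕ} {x : ℕ} (hr : r.Pairwise (· < ·)) (hx : x ∉ r) :
    ∃ k ≤ r.length, (∀ i, (rowInsert r x).1[i]? = if i = k then some x else r[i]?) ∧
      ∀ i (hi : i < r.length), r[i] < x ↔ i < k := by
  induction r with
  | nil => exact ⟨0, le_rfl, fun i => by cases i <;> simp [rowInsert], by simp⟩
  | cons y ys ih =>
    obtain ⟨hy, hys⟩ := pairwise_cons.1 hr
    obtain ⟨hxy, hxys⟩ : x ≠ y ∧ x ∉ ys := by simpa using hx
    unfold rowInsert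
    split_ifs with hlt
    · refine ⟨0, by simp, fun i => by cases i <;> simp, fun i hi => ?_⟩
      cases i with
      | zero => simpa using hlt.le
      | succ i => simpa using (hlt.trans (hy _ (getElem_mem _))).le
    · obtain ⟨k, hk, hget, hlt'⟩ := ih hys hxys
      refine ⟨k + 1, by simpa using hk, fun i => ?_, fun i hi => ?_⟩
      · cases i <;> simp [hget]
      · cases i with
        | zero => simp only [getElem_cons_zero, Nat.zero_lt_succ, iff_true]; omega
        | succ i => simpa using hlt' i (by simpa using hi)

lemma rowInsert_cases {r : List ℕ} {x : ℕ} (hx : x ∉ r) :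
    (∀ y ∈ r, y < x) ∧ rowInsert r x = (r ++ [x], none) ∨
      ∃ a y b, r = a ++ y :: b ∧ (∀ w ∈ a, w < x) ∧ x < y ∧
        rowInsert r x = (a ++ x :: b, some y) := by
  induction r with
  | nil => simp [rowInsert]
  | cons z zs ih =>
    obtain ⟨hxz, hxzs⟩ : x ≠ z ∧ x ∉ zs := by simpa using hx
    unfold rowInsert
    split_ifs with hlt
    · exact .inr ⟨[], z, zs, rfl, by simp, hlt, rfl⟩
    have hzx : z < x := by omega
    rcases ih hxzs with ⟨hall, heq⟩ | ⟨a, y, b, rfl, ha, hxy, heq⟩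
    · exact .inl ⟨by simpa [hzx] using hall, by simp [heq]⟩
    · exact .inr ⟨z :: a, y, b, rfl, by simpa [hzx] using ha, hxy, by simp [heq]⟩

lemma pairwise_bump {α : Type*} [Preorder α] {a b : List α} {x y : α}
    (hr : (a ++ y :: b).Pairwise (· < ·)) (hax : ∀ w ∈ a, w < x) (hxy : x < y) :
    (a ++ x :: b).Pairwise (· < ·) := by
  simp only [pairwise_append, pairwise_cons, mem_cons] at hr ⊢
  obtain ⟨ha, ⟨hyb, hb⟩, hayb⟩ := hr
  exact ⟨ha, ⟨fun z hz => hxy.trans (hyb z hz), hb⟩,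
    fun w hw z hz => hz.elim (· ▸ hax w hw) (hayb w hw z ∘ .inr)⟩

lemma tabInsert_headD (T : List (List ℕ)) (x : ℕ) :
    (tabInsert T x).headD [] = (rowInsert (T.headD []) x).1 := by
  cases T with
  | nil => rfl
  | cons r rs => unfold tabInsert; split <;> simp_all

lemma insTab_append_singleton (p : List ℕ) (x : ℕ) :
    insTab (p ++ [x]) = tabInsert (insTab p) x := by
  simp [insTab]

lemma tabInsert_flatten_perm (T : List (List ℕ)) (x : ℕ) :
    (tabInsert T x).flatten ~ x :: T.flatten := by
  induction T generalizing x with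
  | nil => simp [tabInsert]
  | cons r rs ih =>
    have hrow := rowInsert_perm r x
    unfold tabInsert
    split <;> rename_i heq <;> simp only [heq, Option.toList_none, Option.toList_some,
      append_nil] at hrow
    · simpa using hrow.append_right rs.flatten
    · simpa using ((ih _).append_left _).trans (by simpa using hrow.append_right rs.flatten)

lemma tabInsert_cons_cases {r : List ℕ} {rs : List (List ℕ)} {x : ℕ}
    (hnd : (r :: rs).flatten.Nodup) (hx : x ∉ r) :
    (∀ y ∈ r, y < x) ∧ tabInsert (r :: rs) x = (r ++ [x]) :: rs ∨
      ∃ a y b, r = a ++ y :: b ∧ (∀ w ∈ a, w < x) ∧ x < y ∧ y ∉ rs.flatten ∧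
        tabInsert (r :: rs) x = (a ++ x :: b) :: tabInsert rs y := by
  rcases rowInsert_cases hx with ⟨hall, heq⟩ | ⟨a, y, b, rfl, ha, hxy, heq⟩
  · exact .inl ⟨hall, by simp [tabInsert, heq]⟩
  · refine .inr ⟨a, y, b, rfl, ha, hxy, fun hy => ?_, by simp [tabInsert, heq]⟩
    exact disjoint_of_nodup_append (by rwa [flatten_cons] at hnd) (by simp) hy

lemma head?_map_headD_tabInsert (T : List (List ℕ)) (x : ℕ) :
    ((tabInsert T x).map (·.headD 0)).head? = some (min ((T.headD []).headD x) x) := by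
  cases T with
  | nil => simp [tabInsert]
  | cons r rs =>
    rw [← rowInsert_fst_headD]
    unfold tabInsert
    split <;> simp_all

/-! ### The first row: patience sorting -/

def IncSublistEnd (p : List ℕ) (i v : ℕ) : Prop :=
  ∃ s : List ℕ, s.length = i ∧ (s ++ [v]).Sublist p ∧ (s ++ [v]).Pairwise (· < ·)

lemma IncSublistEnd.mem {p : List ℕ} {i v : ℕ} (h : IncSublistEnd p i v) : v ∈ p := by
  obtain ⟨s, -, hsub, -⟩ := h
  exact hsub.subset (by simp)

lemma IncSublistEnd.exists_lt {p : List ℕ} {i j v : ℕ} (h : IncSublistEnd p j v) (hij : i < j) :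
    ∃ u < v, IncSublistEnd p i u := by
  obtain ⟨s, rfl, hsub, hs⟩ := h
  have hsv := (pairwise_append.1 hs).2.2 s[i] (getElem_mem _) v (by simp)
  refine ⟨s[i], hsv, s.take i, length_take_of_le hij.le, ?_, ?_⟩
  · rw [take_concat_get' s i hij]
    exact ((take_sublist _ _).trans (sublist_append_left _ _)).trans hsub
  · rw [take_concat_get' s i hij]
    exact (pairwise_append.1 hs).1.sublist (take_sublist _ _)

lemma incSublistEnd_append_singleton_iff {p : List ℕ} {x i v : ℕ} :
    IncSublistEnd (p ++ [x]) i v ↔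
      IncSublistEnd p i v ∨ v = x ∧ ∀ j, i = j + 1 → ∃ u < x, IncSublistEnd p j u := by
  constructor
  · rintro ⟨s, rfl, hsub, hs⟩
    obtain ⟨l₁, l₂, hsv, hl₁, hl₂⟩ := sublist_append_iff.1 hsub
    rcases sublist_singleton.1 hl₂ with rfl | rfl
    · exact .inl ⟨s, rfl, by simpa [hsv] using hl₁, hs⟩
    obtain ⟨rfl, rfl⟩ : s = l₁ ∧ v = x := by simpa using hsv
    refine .inr ⟨rfl, fun j hj => ?_⟩
    obtain ⟨s₀, u, rfl⟩ := (eq_nil_or_concat' s).resolve_left (by rintro rfl; simp at hj)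
    refine ⟨u, (pairwise_append.1 hs).2.2 u (by simp) _ (mem_singleton_self _), s₀,
      by simpa using hj,
      hl₁, (pairwise_append.1 hs).1⟩
  · rintro (⟨s, hl, hsub, hs⟩ | ⟨rfl, hprev⟩)
    · exact ⟨s, hl, hsub.trans (sublist_append_left _ _), hs⟩
    cases i with
    | zero => exact ⟨[], rfl, by simp, by simp⟩
    | succ j =>
      obtain ⟨u, hux, s, hl, hsub, hs⟩ := hprev j rfl
      refine ⟨s ++ [u], by simp [hl], hsub.append (Sublist.refl _), pairwise_append.2 ⟨hs, by simp,
        fun a ha b hb => ?_⟩⟩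
      obtain rfl : b = v := by simpa using hb
      rcases mem_append.1 ha with ha | ha
      · exact ((pairwise_append.1 hs).2.2 a ha u (by simp)).trans hux
      · simpa [eq_of_mem_singleton ha] using hux

/-- The row `r` records, in position `i`, the least last entry of an increasing sublist of `p`
of length `i + 1` (patience sorting). -/
structure IsPatienceRow (p r : List ℕ) : Prop where
  incSublistEnd : ∀ i u, r[i]? = some u → IncSublistEnd p i u
  le_of_incSublistEnd : ∀ i v, IncSublistEnd p i v → ∃ u, r[i]? = some u ∧ u ≤ v

lemma IsPatienceRow.pairwise {p r : List ℕ} (h : IsPatienceRow p r) : r.Pairwise (· < ·) := by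
  refine pairwise_iff_getElem.2 fun i j hi hj hij => ?_
  obtain ⟨u, hu, hinc⟩ := (h.incSublistEnd j r[j] (getElem?_eq_getElem hj)).exists_lt hij
  obtain ⟨u', hu', hle⟩ := h.le_of_incSublistEnd i u hinc
  rw [getElem?_eq_getElem hi, Option.some.injEq] at hu'
  omega

lemma IsPatienceRow.rowInsert {p r : List ℕ} {x : ℕ} (h : IsPatienceRow p r) (hx : x ∉ p) :
    IsPatienceRow (p ++ [x]) (rowInsert r x).1 := by
  have hxr : x ∉ r := fun hxr => by
    obtain ⟨i, hi, rfl⟩ := getElem_of_mem hxr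
    exact hx (h.incSublistEnd i _ (getElem?_eq_getElem hi)).mem
  obtain ⟨k, hk, hget, hlt⟩ := exists_rowInsert_fst_getElem? h.pairwise hxr
  refine ⟨fun i u hu => ?_, fun i v hv => ?_⟩
  · rw [hget] at hu
    split_ifs at hu with hik
    · obtain ⟨rfl, rfl⟩ : i = k ∧ x = u := ⟨hik, Option.some.inj hu⟩
      refine incSublistEnd_append_singleton_iff.2 (.inr ⟨rfl, fun j hj => ?_⟩)
      have hj : j < r.length := by omega
      exact ⟨r[j], (hlt j hj).2 (by omega), h.incSublistEnd j _ (getElem?_eq_getElem hj)⟩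
    · exact incSublistEnd_append_singleton_iff.2 (.inl (h.incSublistEnd i u hu))
  rcases incSublistEnd_append_singleton_iff.1 hv with hv | ⟨rfl, hprev⟩
  · obtain ⟨u, hu, huv⟩ := h.le_of_incSublistEnd i v hv
    rw [hget]
    split_ifs with hik
    · obtain ⟨hi, rfl⟩ := List.getElem?_eq_some_iff.1 hu
      have hnlt : ¬r[i] < x := fun h => by have := (hlt i hi).1 h; omega
      have hne : r[i] ≠ x := fun e => hxr (e ▸ getElem_mem _)
      exact ⟨x, rfl, by omega⟩
    · exact ⟨u, hu, huv⟩
  · have hik : i ≤ k := by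
      cases i with
      | zero => omega
      | succ j =>
        obtain ⟨u, hux, hinc⟩ := hprev j rfl
        obtain ⟨w, hw, hwu⟩ := h.le_of_incSublistEnd j u hinc
        obtain ⟨hj, rfl⟩ := List.getElem?_eq_some_iff.1 hw
        exact (hlt j hj).1 (by omega)
    rw [hget]
    split_ifs with hik'
    · exact ⟨v, rfl, le_rfl⟩
    · have hi : i < r.length := by omega
      exact ⟨r[i], getElem?_eq_getElem hi, ((hlt i hi).2 (by omega)).le⟩

lemma IsPatienceRow.isGreatest {p r : List ℕ} (h : IsPatienceRow p r) :
    IsGreatest (sublistLengths (· < ·) p) r.length := by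
  refine ⟨?_, ?_⟩
  · rcases eq_nil_or_concat' r with rfl | ⟨r₀, u, rfl⟩
    · exact ⟨[], nil_sublist _, by simp, rfl⟩
    · obtain ⟨s, hl, hsub, hs⟩ := h.incSublistEnd r₀.length u (by simp)
      exact ⟨s ++ [u], hsub, hs, by simp [hl]⟩
  · rintro _ ⟨s, hsub, hs, rfl⟩
    rcases eq_nil_or_concat' s with rfl | ⟨s₀, u, rfl⟩
    · simp
    · obtain ⟨v, hv, -⟩ := h.le_of_incSublistEnd s₀.length u ⟨s₀, rfl, hsub, hs⟩
      simpa using (List.getElem?_eq_some_iff.1 hv).1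

lemma isPatienceRow_insTab {w : List ℕ} (hw : w.Nodup) : IsPatienceRow w ((insTab w).headD []) := by
  induction w using reverseRecOn with
  | nil => exact ⟨by simp [insTab], fun i v ⟨s, _, hsub, _⟩ => by simp at hsub⟩
  | append_singleton p x ih =>
    obtain ⟨hx, hp⟩ := (nodup_concat p x).1 (by simpa using hw)
    rw [insTab_append_singleton, tabInsert_headD]
    exact (ih hp).rowInsert hx

/-! ### Knuth transformations and decreasing sublists -/

inductive KnuthStep : List ℕ → List ℕ → Prop
  | yzx (u v : List ℕ) {x y z : ℕ} (hxy : x < y) (hyz : y < z) :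
      KnuthStep (u ++ [y, z, x] ++ v) (u ++ [y, x, z] ++ v)
  | xzy (u v : List ℕ) {x y z : ℕ} (hxy : x < y) (hyz : y < z) :
      KnuthStep (u ++ [x, z, y] ++ v) (u ++ [z, x, y] ++ v)

lemma KnuthStep.append_append {a b : List ℕ} (h : KnuthStep a b) (u v : List ℕ) :
    KnuthStep (u ++ a ++ v) (u ++ b ++ v) := by
  cases h with
  | yzx u' v' hxy hyz => simpa using KnuthStep.yzx (u ++ u') (v' ++ v) hxy hyz
  | xzy u' v' hxy hyz => simpa using KnuthStep.xzy (u ++ u') (v' ++ v) hxy hyz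

lemma reflTransGen_knuthStep_append_append {a b : List ℕ} (h : ReflTransGen KnuthStep a b)
    (u v : List ℕ) : ReflTransGen KnuthStep (u ++ a ++ v) (u ++ b ++ v) :=
  h.lift (fun w => u ++ w ++ v) fun _ _ hab => hab.append_append u v

lemma reflTransGen_knuthStep_cons_append_singleton {y x : ℕ} {b : List ℕ}
    (hb : (y :: b).Pairwise (· < ·)) (hxy : x < y) :
    ReflTransGen KnuthStep (y :: b ++ [x]) (y :: x :: b) := by
  induction b generalizing y with
  | nil => rfl
  | cons z b ih =>
    obtain ⟨hyzb, hzb⟩ := pairwise_cons.1 hb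
    have hyz : y < z := hyzb z (mem_cons_self ..)
    have hmove := reflTransGen_knuthStep_append_append (ih hzb (hxy.trans hyz)) [y] []
    have hswap := KnuthStep.yzx [] b hxy hyz
    simp only [append_nil, nil_append, cons_append] at hmove hswap ⊢
    exact hmove.tail hswap

lemma reflTransGen_knuthStep_append_cons_cons {a t : List ℕ} {x y : ℕ}
    (ha : a.Pairwise (· < ·)) (hax : ∀ w ∈ a, w < x) (hxy : x < y) :
    ReflTransGen KnuthStep (a ++ y :: x :: t) (y :: (a ++ x :: t)) := by
  induction a using reverseRecOn generalizing x t with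
  | nil => rfl
  | append_singleton a w ih =>
    obtain ⟨ha', -, haw⟩ := pairwise_append.1 ha
    have hwx : w < x := hax w (by simp)
    have hswap := KnuthStep.xzy a t hwx hxy
    have hmove := ih (t := x :: t) ha' (fun v hv => haw v hv w (by simp)) (hwx.trans hxy)
    simp only [append_assoc, cons_append, nil_append] at hswap hmove ⊢
    exact (ReflTransGen.single hswap).trans hmove

lemma reflTransGen_knuthStep_bump {a b : List ℕ} {x y : ℕ}
    (hr : (a ++ y :: b).Pairwise (· < ·)) (hax : ∀ w ∈ a, w < x) (hxy : x < y) :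
    ReflTransGen KnuthStep (a ++ y :: b ++ [x]) (y :: (a ++ x :: b)) := by
  obtain ⟨ha, hyb, -⟩ := pairwise_append.1 hr
  have hmove := reflTransGen_knuthStep_append_append
    (reflTransGen_knuthStep_cons_append_singleton hyb hxy) a []
  simp only [append_nil, append_assoc, cons_append] at hmove ⊢
  exact hmove.trans (reflTransGen_knuthStep_append_cons_cons ha hax hxy)

lemma sublistLengths_gt_subset {α : Type*} [Preorder α] {u v m m' : List α}
    (hrep : ∀ s, s <+ m → s.Pairwise (· > ·) → ∃ s', s' <+ m' ∧ s'.Pairwise (· > ·) ∧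
      s'.length = s.length ∧ ∀ c ∈ s', (∃ d ∈ s, c ≤ d) ∧ ∃ d ∈ s, d ≤ c) :
    sublistLengths (· > ·) (u ++ m ++ v) ⊆ sublistLengths (· > ·) (u ++ m' ++ v) := by
  rintro _ ⟨s, hsub, hs, rfl⟩
  obtain ⟨s₁, s₂₃, rfl, hsub₁, hsub₂₃⟩ := sublist_append_iff.1 (append_assoc u m v ▸ hsub)
  obtain ⟨s₂, s₃, rfl, hsub₂, hsub₃⟩ := sublist_append_iff.1 hsub₂₃
  simp only [pairwise_append, mem_append] at hs
  obtain ⟨hs₁, ⟨hs₂, hs₃, hs₂₃⟩, hs₁₂₃⟩ := hs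
  obtain ⟨s₂', hsub₂', hs₂', hlen, hbound⟩ := hrep s₂ hsub₂ hs₂
  refine ⟨s₁ ++ s₂' ++ s₃, (hsub₁.append hsub₂').append hsub₃, ?_, by simp [hlen]⟩
  simp only [pairwise_append, mem_append]
  refine ⟨⟨hs₁, hs₂', fun a ha c hc => ?_⟩, hs₃, fun c hc e he => ?_⟩
  · obtain ⟨d, hd, hcd⟩ := (hbound c hc).1
    exact lt_of_le_of_lt hcd (hs₁₂₃ a ha d (.inl hd))
  · rcases hc with hc | hc
    · exact hs₁₂₃ c hc e (.inr he)
    · obtain ⟨d, hd, hdc⟩ := (hbound c hc).2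
      exact lt_of_lt_of_le (hs₂₃ d hd e he) hdc

lemma exists_replacement_self {α : Type*} [Preorder α] {s m' : List α} (hsub : s <+ m')
    (hs : s.Pairwise (· > ·)) :
    ∃ s', s' <+ m' ∧ s'.Pairwise (· > ·) ∧ s'.length = s.length ∧
      ∀ c ∈ s', (∃ d ∈ s, c ≤ d) ∧ ∃ d ∈ s, d ≤ c :=
  ⟨s, hsub, hs, rfl, fun c hc => ⟨⟨c, hc, le_rfl⟩, c, hc, le_rfl⟩⟩

lemma sublist_three_cases {α : Type*} {s : List α} {a b c : α} (h : s <+ [a, b, c]) :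
    s = [] ∨ s = [a] ∨ s = [b] ∨ s = [a, b] ∨ s = [c] ∨ s = [a, c] ∨ s = [b, c] ∨
      s = [a, b, c] := by
  simpa [sublists] using mem_sublists.2 h

lemma KnuthStep.sublistLengths_gt_eq {a b : List ℕ} (h : KnuthStep a b) :
    sublistLengths (· > ·) a = sublistLengths (· > ·) b := by
  -- The only decreasing pair of the window that a step reverses is `z x`; it is traded for
  -- `y x` in `yzx` and for `z y` in `xzy`.
  cases h with
  | @yzx u v x y z hxy hyz =>
    refine subset_antisymm (sublistLengths_gt_subset fun s hsub hs => ?_)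
      (sublistLengths_gt_subset fun s hsub hs => ?_) <;>
    · rcases sublist_three_cases hsub with rfl | rfl | rfl | rfl | rfl | rfl | rfl | rfl <;>
        first
        | (exfalso; simp at hs; omega)
        | exact exists_replacement_self (by simp) hs
        | (refine ⟨[y, x], ?_, ?_, ?_, ?_⟩ <;> simp <;> omega)
  | @xzy u v x y z hxy hyz =>
    refine subset_antisymm (sublistLengths_gt_subset fun s hsub hs => ?_)
      (sublistLengths_gt_subset fun s hsub hs => ?_) <;>
    · rcases sublist_three_cases hsub with rfl | rfl | rfl | rfl | rfl | rfl | rfl | rfl <;>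
        first
        | (exfalso; simp at hs; omega)
        | exact exists_replacement_self (by simp) hs
        | (refine ⟨[z, y], ?_, ?_, ?_, ?_⟩ <;> simp <;> omega)

lemma sublistLengths_gt_eq_of_reflTransGen {a b : List ℕ} (h : ReflTransGen KnuthStep a b) :
    sublistLengths (· > ·) a = sublistLengths (· > ·) b := by
  induction h with
  | refl => rfl
  | tail _ hstep ih => exact ih.trans hstep.sublistLengths_gt_eq

/-! ### The row word of the insertion tableau -/

/-- Weaker than a standard tableau: of the columns, only the first is required to increase. -/
structure IsRowTableau (T : List (List ℕ)) : Prop where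
  pairwise : ∀ r ∈ T, r.Pairwise (· < ·)
  ne_nil : ∀ r ∈ T, r ≠ []
  isChain_headD : (T.map (·.headD 0)).IsChain (· < ·)
  nodup : T.flatten.Nodup

lemma IsRowTableau.tail {r : List ℕ} {rs : List (List ℕ)} (h : IsRowTableau (r :: rs)) :
    IsRowTableau rs where
  pairwise r' hr' := h.pairwise r' (mem_cons_of_mem _ hr')
  ne_nil r' hr' := h.ne_nil r' (mem_cons_of_mem _ hr')
  isChain_headD := h.isChain_headD.tail
  nodup := h.nodup.sublist (by simp)

lemma lt_head?_map_headD_tabInsert {rs : List (List ℕ)} {y m : ℕ} (hne : ∀ r ∈ rs, r ≠ [])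
    (hy : m < y) (hrs : ∀ h ∈ (rs.map (·.headD 0)).head?, m < h) :
    ∀ h ∈ ((tabInsert rs y).map (·.headD 0)).head?, m < h := by
  rw [head?_map_headD_tabInsert]
  rintro _ ⟨⟩
  cases rs with
  | nil => simpa using hy
  | cons r rs =>
    obtain ⟨d, r, rfl⟩ := exists_cons_of_ne_nil (hne _ (mem_cons_self ..))
    have hd : m < d := hrs d (by simp)
    simp only [headD_cons]
    omega

lemma isRowTableau_tabInsert {T : List (List ℕ)} {x : ℕ} (hT : IsRowTableau T)
    (hx : x ∉ T.flatten) : IsRowTableau (tabInsert T x) := by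
  induction T generalizing x with
  | nil => constructor <;> simp [tabInsert]
  | cons r rs ih =>
    have hnodup := (tabInsert_flatten_perm _ x).nodup_iff.2 (nodup_cons.2 ⟨hx, hT.nodup⟩)
    have hr := hT.pairwise r (mem_cons_self ..)
    obtain ⟨c, r, rfl⟩ := exists_cons_of_ne_nil (hT.ne_nil _ (mem_cons_self ..))
    have hxr : x ∉ c :: r := fun h => hx (mem_flatten.2 ⟨_, mem_cons_self .., h⟩)
    rcases tabInsert_cons_cases hT.nodup hxr with ⟨hall, heq⟩ | ⟨a, y, b, hr', ha, hxy, hy, heq⟩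
    · rw [heq] at hnodup ⊢
      refine ⟨forall_mem_cons.2 ⟨?_, hT.tail.pairwise⟩, forall_mem_cons.2 ⟨by simp, hT.tail.ne_nil⟩,
        by simpa using hT.isChain_headD, hnodup⟩
      exact pairwise_append.2 ⟨hr, by simp, fun u hu v hv => (eq_of_mem_singleton hv) ▸ hall u hu⟩
    · rw [heq] at hnodup ⊢
      have ih' := ih hT.tail hy
      refine ⟨forall_mem_cons.2 ⟨pairwise_bump (hr' ▸ hr) ha hxy, ih'.pairwise⟩,
        forall_mem_cons.2 ⟨by simp, ih'.ne_nil⟩, isChain_cons.2 ⟨?_, ih'.isChain_headD⟩, hnodup⟩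
      have hhead : (a ++ x :: b).headD 0 ≤ min c x := by
        cases a with
        | nil => obtain ⟨rfl, -⟩ := cons.inj hr'; simp only [nil_append, headD_cons]; omega
        | cons w a =>
          obtain ⟨rfl, -⟩ := cons.inj hr'
          simpa using (ha c (mem_cons_self ..)).le
      refine lt_head?_map_headD_tabInsert (m := (a ++ x :: b).headD 0) hT.tail.ne_nil (by omega)
        fun h hh => ?_
      have hc := (isChain_cons.1 hT.isChain_headD).1 h hh
      simp only [headD_cons] at hc
      omega

def rowWord (T : List (List ℕ)) : List ℕ := T.reverse.flatten

lemma reflTransGen_knuthStep_rowWord_tabInsert {T : List (List ℕ)} {x : ℕ}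
    (hT : IsRowTableau T) (hx : x ∉ T.flatten) :
    ReflTransGen KnuthStep (rowWord T ++ [x]) (rowWord (tabInsert T x)) := by
  induction T generalizing x with
  | nil => rfl
  | cons r rs ih =>
    have hxr : x ∉ r := fun h => hx (mem_flatten.2 ⟨_, mem_cons_self .., h⟩)
    rcases tabInsert_cons_cases hT.nodup hxr with ⟨-, heq⟩ | ⟨a, y, b, rfl, ha, hxy, hy, heq⟩
    · simpa [heq, rowWord] using ReflTransGen.refl
    · have hbump : ReflTransGen KnuthStep (rowWord rs ++ (a ++ y :: b) ++ [x])
          (rowWord rs ++ [y] ++ (a ++ x :: b)) := by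
        simpa using reflTransGen_knuthStep_append_append
          (reflTransGen_knuthStep_bump (hT.pairwise _ (mem_cons_self ..)) ha hxy) (rowWord rs) []
      have hrest : ReflTransGen KnuthStep (rowWord rs ++ [y] ++ (a ++ x :: b))
          (rowWord (tabInsert rs y) ++ (a ++ x :: b)) := by
        simpa using reflTransGen_knuthStep_append_append (ih hT.tail hy) [] (a ++ x :: b)
      rw [heq]
      simpa [rowWord] using hbump.trans hrest

lemma insTab_spec {w : List ℕ} (hw : w.Nodup) :
    IsRowTableau (insTab w) ∧ (insTab w).flatten ~ w ∧
      ReflTransGen KnuthStep w (rowWord (insTab w)) := by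
  induction w using reverseRecOn with
  | nil => exact ⟨by constructor <;> simp [insTab], by simp [insTab], .refl⟩
  | append_singleton p x ih =>
    obtain ⟨hx, hp⟩ := (nodup_concat p x).1 (by simpa using hw)
    obtain ⟨hT, hperm, hknuth⟩ := ih hp
    have hxT : x ∉ (insTab p).flatten := fun h => hx (hperm.subset h)
    rw [insTab_append_singleton]
    exact ⟨isRowTableau_tabInsert hT hxT,
      (tabInsert_flatten_perm _ x).trans ((hperm.cons x).trans (perm_append_singleton x p).symm),
      (reflTransGen_knuthStep_append_append hknuth [] [x]).trans
        (by simpa using reflTransGen_knuthStep_rowWord_tabInsert hT hxT)⟩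

lemma map_headD_sublist_flatten {α : Type*} {L : List (List α)} (h : ∀ r ∈ L, r ≠ []) (d : α) :
    L.map (·.headD d) <+ L.flatten := by
  induction L with
  | nil => simp
  | cons r L ih =>
    obtain ⟨c, r, rfl⟩ := exists_cons_of_ne_nil (h _ (mem_cons_self ..))
    exact ((ih fun r' hr' => h r' (mem_cons_of_mem _ hr')).trans
      (sublist_append_right _ _)).cons_cons c

lemma length_le_of_sublist_flatten {α : Type*} [Preorder α] {s : List α} {L : List (List α)}
    (hsub : s <+ L.flatten) (hs : s.Pairwise (· > ·)) (hL : ∀ r ∈ L, r.Pairwise (· < ·)) :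
    s.length ≤ L.length := by
  induction L generalizing s with
  | nil => simp_all
  | cons r L ih =>
    obtain ⟨s₁, s₂, rfl, hsub₁, hsub₂⟩ := sublist_append_iff.1 hsub
    obtain ⟨hs₁, hs₂, -⟩ := pairwise_append.1 hs
    have hlen₂ := ih hsub₂ hs₂ fun r' hr' => hL r' (mem_cons_of_mem _ hr')
    have hlen₁ : s₁.length ≤ 1 := by
      match s₁, hs₁, (hL r (mem_cons_self ..)).sublist hsub₁ with
      | [], _, _ | [_], _, _ => simp
      | _ :: _ :: _, hgt, hlt =>
        exact absurd (rel_of_pairwise_cons hgt (mem_cons_self ..))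
          (rel_of_pairwise_cons hlt (mem_cons_self ..)).asymm
    simp only [length_append, length_cons]
    omega

lemma IsRowTableau.isGreatest_sublistLengths_gt_rowWord {T : List (List ℕ)}
    (hT : IsRowTableau T) : IsGreatest (sublistLengths (· > ·) (rowWord T)) T.length := by
  refine ⟨⟨(T.map (·.headD 0)).reverse, ?_, ?_, by simp⟩, ?_⟩
  · rw [← map_reverse]
    exact map_headD_sublist_flatten (fun r hr => hT.ne_nil r (mem_reverse.1 hr)) 0
  · exact pairwise_reverse.2 (isChain_iff_pairwise.1 hT.isChain_headD)
  · rintro _ ⟨s, hsub, hs, rfl⟩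
    simpa using length_le_of_sublist_flatten hsub hs fun r hr => hT.pairwise r (mem_reverse.1 hr)

end Schensted

/-- Schensted's theorem: for a word `w` of distinct integers, the longest increasing
subsequence of `w` has length `λ₁` (the first part of the RSK shape of `w`), and the
longest decreasing subsequence has length the number of rows of the shape. -/
theorem stmt9 (w : List ℕ) (hw : w.Nodup) :
    sSup {k | ∃ s : List ℕ, s.Sublist w ∧ s.Pairwise (· < ·) ∧ s.length = k} =
      ((insTab w).headD []).length ∧
    sSup {k | ∃ s : List ℕ, s.Sublist w ∧ s.Pairwise (· > ·) ∧ s.length = k} =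
      (insTab w).length := by
  obtain ⟨hT, -, hknuth⟩ := Schensted.insTab_spec hw
  refine ⟨(Schensted.isPatienceRow_insTab hw).isGreatest.csSup_eq, ?_⟩
  rw [← hT.isGreatest_sublistLengths_gt_rowWord.csSup_eq,
    ← Schensted.sublistLengths_gt_eq_of_reflTransGen hknuth]
  rfl
end

section
/- The number of sequences 0 = a_0, a_1, ..., a_{2n} = 0 of nonnegative integers such that a_{2i+1} ∈ {a_{2i}, a_{2i}−1} and a_{2i} ∈ {a_{2i−1}, a_{2i−1}+1} for all applicable i, equals the n-th Catalan number C_n. -/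
/-- Sequences `0 = a_0, a_1, …, a_{2n} = 0` of nonnegative integers with
`a_{2i+1} ∈ {a_{2i}, a_{2i}−1}` and `a_{2i+2} ∈ {a_{2i+1}, a_{2i+1}+1}`
(encoded as functions `ℕ → ℕ` constant `0` from `2n` on). -/
def IsVacSeq (n : ℕ) (a : ℕ → ℕ) : Prop :=
  a 0 = 0 ∧ a (2 * n) = 0 ∧ (∀ k, 2 * n ≤ k → a k = 0) ∧
  (∀ i < n, a (2 * i + 1) = a (2 * i) ∨ a (2 * i + 1) + 1 = a (2 * i)) ∧
  (∀ i < n, a (2 * i + 2) = a (2 * i + 1) ∨ a (2 * i + 2) = a (2 * i + 1) + 1)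

open List DyckStep

namespace VacAux

/-- Transformed height sequence. -/
def F (a : ℕ → ℕ) (j : ℕ) : ℕ := 2 * a j + j % 2

/-- Height of a prefix of a step list. -/
def ht (l : List DyckStep) (j : ℕ) : ℕ := (l.take j).count U - (l.take j).count D

/-- The Dyck-step list associated to a vacillating sequence. -/
def L (n : ℕ) (a : ℕ → ℕ) : List DyckStep :=
  (List.range (2*n)).map (fun j => if F a (j+1) = F a j + 1 then U else D)

lemma length_L (n : ℕ) (a : ℕ → ℕ) : (L n a).length = 2*n := by simp [L]

lemma count_take_succ (l : List DyckStep) {j : ℕ} (hj : j < l.length) (s : DyckStep) :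
    (l.take (j+1)).count s = (l.take j).count s + if l[j] = s then 1 else 0 := by
  rw [List.take_succ, List.count_append, List.getElem?_eq_getElem hj]
  simp [List.count_cons]

lemma F_step {n : ℕ} {a : ℕ → ℕ} (h : IsVacSeq n a) {j : ℕ} (hj : j < 2*n) :
    F a (j+1) = F a j + 1 ∨ F a (j+1) + 1 = F a j := by
  obtain ⟨h0, h1, h2, h4, h5⟩ := h
  rcases Nat.even_or_odd j with ⟨i, hi⟩ | ⟨i, hi⟩
  · have hin : i < n := by omega
    have e : 2*i = j := by omega
    have := h4 i hin
    rw [e] at this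
    have e1 : F a (j+1) = 2 * a (j+1) + (j+1) % 2 := rfl
    have e2 : F a j = 2 * a j + j % 2 := rfl
    omega
  · have hin : i < n := by omega
    have e : 2*i + 1 = j := by omega
    have := h5 i hin
    rw [show (2*i+2) = (2*i+1)+1 by ring, e] at this
    have e1 : F a (j+1) = 2 * a (j+1) + (j+1) % 2 := rfl
    have e2 : F a j = 2 * a j + j % 2 := rfl
    omega

lemma count_L {n : ℕ} {a : ℕ → ℕ} (h : IsVacSeq n a) :
    ∀ i, i ≤ 2*n → ((L n a).take i).count U = ((L n a).take i).count D + F a i := by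
  intro i
  induction i with
  | zero =>
    intro _
    have : F a 0 = 2 * a 0 + 0 % 2 := rfl
    simp [this, h.1]
  | succ i ih =>
    intro hi
    have hi' : i < 2*n := by omega
    have hilen : i < (L n a).length := by rw [length_L]; exact hi'
    have hU := count_take_succ (L n a) hilen U
    have hD := count_take_succ (L n a) hilen D
    have hL : (L n a)[i]'hilen = if F a (i+1) = F a i + 1 then U else D := by
      simp [L]
    have hih := ih (le_of_lt hi')
    rcases F_step h hi' with hs | hs
    · rw [hL, if_pos hs] at hU hD
      simp only [reduceCtorEq, if_true, if_false, reduceIte] at hU hD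
      omega
    · have hne : ¬ (F a (i+1) = F a i + 1) := by omega
      rw [hL, if_neg hne] at hU hD
      simp only [reduceCtorEq, if_true, if_false, reduceIte] at hU hD
      omega

lemma take_L_full {n : ℕ} (a : ℕ → ℕ) {k : ℕ} (hk : 2*n ≤ k) :
    (L n a).take k = L n a :=
  List.take_of_length_le (by rw [length_L]; exact hk)

lemma F_two_n {n : ℕ} {a : ℕ → ℕ} (h : IsVacSeq n a) : F a (2*n) = 0 := by
  have : F a (2*n) = 2 * a (2*n) + (2*n) % 2 := rfl
  have h1 := h.2.1
  omega

/-- The Dyck word associated to a vacillating sequence. -/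
def toDyck (n : ℕ) (a : ℕ → ℕ) (h : IsVacSeq n a) : DyckWord where
  toList := L n a
  count_U_eq_count_D := by
    have hc := count_L h (2*n) le_rfl
    rw [take_L_full a le_rfl] at hc
    rw [hc, F_two_n h]
    omega
  count_D_le_count_U i := by
    rcases le_or_gt i (2*n) with hi | hi
    · have := count_L h i hi
      omega
    · rw [take_L_full a (le_of_lt hi)]
      have hc := count_L h (2*n) le_rfl
      rw [take_L_full a le_rfl] at hc
      omega

lemma semilength_toDyck {n : ℕ} {a : ℕ → ℕ} (h : IsVacSeq n a) :
    (toDyck n a h).semilength = n := by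
  have := (toDyck n a h).two_mul_semilength_eq_length
  have hl : (toDyck n a h).toList.length = 2*n := length_L n a
  omega

lemma ht_step (p : DyckWord) {j : ℕ} (hj : j < p.toList.length) :
    (p.toList[j] = U ∧ ht p.toList (j+1) = ht p.toList j + 1) ∨
    (p.toList[j] = D ∧ ht p.toList j = ht p.toList (j+1) + 1) := by
  have hU := count_take_succ p.toList hj U
  have hD := count_take_succ p.toList hj D
  have l1 := p.count_D_le_count_U j
  have l2 := p.count_D_le_count_U (j+1)
  unfold ht
  cases hc : p.toList[j] with
  | U =>
    left
    rw [hc] at hU hD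
    simp only [reduceCtorEq, if_true, if_false, reduceIte] at hU hD
    exact ⟨rfl, by omega⟩
  | D =>
    right
    rw [hc] at hU hD
    simp only [reduceCtorEq, if_true, if_false, reduceIte] at hU hD
    exact ⟨rfl, by omega⟩

lemma ht_zero (l : List DyckStep) : ht l 0 = 0 := by simp [ht]

lemma ht_parity (p : DyckWord) : ∀ j, j ≤ p.toList.length → ht p.toList j % 2 = j % 2 := by
  intro j
  induction j with
  | zero => intro _; simp [ht_zero]
  | succ j ih =>
    intro hj
    have hj' : j < p.toList.length := by omega
    have := ih (le_of_lt hj')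
    rcases ht_step p hj' with ⟨-, h⟩ | ⟨-, h⟩ <;> omega

lemma ht_full (p : DyckWord) {k : ℕ} (hk : p.toList.length ≤ k) : ht p.toList k = 0 := by
  unfold ht
  rw [List.take_of_length_le hk, p.count_U_eq_count_D]
  omega

lemma isVacSeq_inv {n : ℕ} (p : DyckWord) (hs : p.semilength = n) :
    IsVacSeq n (fun j => ht p.toList j / 2) := by
  have hlen : p.toList.length = 2*n := by
    have := p.two_mul_semilength_eq_length
    omega
  refine ⟨by simp [ht_zero], ?_, fun k hk => ?_, fun i hi => ?_, fun i hi => ?_⟩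
  · show ht p.toList (2*n) / 2 = 0
    rw [ht_full p (by omega)]
  · show ht p.toList k / 2 = 0
    rw [ht_full p (by omega)]
  · have hj : 2*i < p.toList.length := by omega
    have hpar := ht_parity p (2*i) (by omega)
    rcases ht_step p hj with ⟨-, h⟩ | ⟨-, h⟩ <;> simp only [] <;> omega
  · have hj : 2*i + 1 < p.toList.length := by omega
    have hpar := ht_parity p (2*i+1) (by omega)
    have e : (2*i+1)+1 = 2*i+2 := rfl
    rcases ht_step p hj with ⟨-, h⟩ | ⟨-, h⟩ <;> rw [e] at h <;> simp only [] <;> omega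

lemma ht_L {n : ℕ} {a : ℕ → ℕ} (h : IsVacSeq n a) {j : ℕ} (hj : j ≤ 2*n) :
    ht (L n a) j = F a j := by
  have := count_L h j hj
  unfold ht
  omega

/-- The bijection between vacillating sequences and Dyck words. -/
noncomputable def vacEquiv (n : ℕ) :
    {a : ℕ → ℕ // IsVacSeq n a} ≃ {p : DyckWord // p.semilength = n} where
  toFun x := ⟨toDyck n x.1 x.2, semilength_toDyck x.2⟩
  invFun y := ⟨fun j => ht y.1.toList j / 2, isVacSeq_inv y.1 y.2⟩
  left_inv := by
    rintro ⟨a, ha⟩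
    ext j : 2
    show ht (L n a) j / 2 = a j
    rcases le_or_gt j (2*n) with hj | hj
    · rw [ht_L ha hj]
      have : F a j = 2 * a j + j % 2 := rfl
      omega
    · have h1 : ht (L n a) j = 0 := by
        unfold ht
        rw [take_L_full a (le_of_lt hj)]
        have := count_L ha (2*n) le_rfl
        rw [take_L_full a le_rfl] at this
        rw [this, F_two_n ha]
        omega
      rw [h1, ha.2.2.1 j (le_of_lt hj)]
  right_inv := by
    rintro ⟨p, hs⟩
    have hlen : p.toList.length = 2*n := by
      have := p.two_mul_semilength_eq_length
      omega
    set a : ℕ → ℕ := fun j => ht p.toList j / 2 with ha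
    have eF : ∀ k, k ≤ 2*n → F a k = ht p.toList k := by
      intro k hk
      have hpar := ht_parity p k (by omega)
      have : F a k = 2 * (ht p.toList k / 2) + k % 2 := rfl
      omega
    apply Subtype.ext
    apply DyckWord.ext
    show L n a = p.toList
    apply List.ext_getElem
    · rw [length_L, hlen]
    · intro j hj1 hj2
      have hj : j < 2*n := by rwa [length_L] at hj1
      have hjl : j < p.toList.length := by omega
      have hget : (L n a)[j]'hj1 = if F a (j+1) = F a j + 1 then U else D := by
        simp [L]
      rw [hget]
      rcases ht_step p hjl with ⟨hc, h⟩ | ⟨hc, h⟩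
      · rw [hc, if_pos]
        rw [eF _ (by omega), eF _ (by omega)]
        exact h
      · rw [hc, if_neg]
        rw [eF _ (by omega), eF _ (by omega)]
        omega

end VacAux

/-- The number of such sequences is the `n`-th Catalan number. -/
theorem stmt16 (n : ℕ) :
    Nat.card {a : ℕ → ℕ // IsVacSeq n a} = catalan n := by
  rw [Nat.card_congr (VacAux.vacEquiv n), Nat.card_eq_fintype_card,
    DyckWord.card_dyckWord_semilength_eq_catalan]
end

section
/- The multiplicity of (1+q) as a factor of the Gaussian binomial coefficient [k+j choose k]_q is ⌊(k+j)/2⌋ − ⌊k/2⌋ − ⌊j/2⌋. In particular, the Gaussian binomial [k+j choose k]_q evaluated at q = −1 is nonzero if and only if k and j are not both odd. -/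
open Polynomial

/-- The number of integer partitions of `n` with at most `k` parts, each at most `j`. -/
noncomputable def pFit (k j n : ℕ) : ℕ :=
  Nat.card {μ : YoungDiagram // μ.card = n ∧ ∀ c ∈ μ.cells, c.1 < k ∧ c.2 < j}

/-- The Gaussian binomial coefficient `[k+j choose k]_q` as a polynomial in `q`,
namely the generating function `∑_n p(k,j,n) q^n`. -/
noncomputable def gaussBinom (k j : ℕ) : Polynomial ℤ :=
  ∑ n ∈ Finset.range (k * j + 1), Polynomial.C (pFit k j n : ℤ) * Polynomial.X ^ n

/-!
Sorting the partitions in a `(k+1) × (j+1)` box by whether their first column is full, and removing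
a full first column, gives `[k+j+2 choose k+1] = [k+j+1 choose k] + q^(k+1) [k+j+1 choose k+1]`,
hence the product formula `[k+j choose k]_q (q;q)_k = (q^(j+1);q)_k`. A factor `1 - q^m` contains
`1 + q` exactly once if `m` is even and not at all if `m` is odd, so the multiplicity of `1 + q` is
the number of even integers in `(j, j+k]` minus the number of even integers in `(0, k]`.
-/

open Finset

lemma card_eq_card_and_add_card_and_not {α : Type*} (p q : α → Prop) [Finite {a // p a}] :
    Nat.card {a // p a} = Nat.card {a // p a ∧ q a} + Nat.card {a // p a ∧ ¬ q a} := by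
  classical
  rw [← Nat.card_congr (Equiv.subtypeSubtypeEquivSubtypeInter p q),
    ← Nat.card_congr (Equiv.subtypeSubtypeEquivSubtypeInter p (¬ q ·)), ← Nat.card_sum,
    Nat.card_congr (Equiv.sumCompl _)]

namespace YoungDiagram

lemma card_eq_zero {μ : YoungDiagram} : μ.card = 0 ↔ μ = ⊥ := by
  rw [YoungDiagram.card, Finset.card_eq_zero, YoungDiagram.ext_iff, cells_bot]

lemma lt_colLen_zero {μ : YoungDiagram} {i j : ℕ} (h : (i, j) ∈ μ) : i < μ.colLen 0 :=
  mem_iff_lt_colLen.1 (μ.up_left_mem le_rfl (Nat.zero_le j) h)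

noncomputable def dropCol (μ : YoungDiagram) : YoungDiagram where
  cells := μ.cells.preimage (Prod.map id (· + 1))
    (Prod.map_injective.2 ⟨Function.injective_id, add_left_injective 1⟩).injOn
  isLowerSet a b hba ha := by
    simp only [mem_coe, Finset.mem_preimage, mem_cells, Prod.map] at ha ⊢
    exact μ.up_left_mem hba.1 (Nat.add_le_add_right hba.2 1) ha

@[simp]
lemma mem_dropCol {μ : YoungDiagram} {c : ℕ × ℕ} : c ∈ μ.dropCol ↔ (c.1, c.2 + 1) ∈ μ := by
  simp [dropCol, ← mem_cells, Prod.map]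

/-- Prepends a column of height `m`, discarding the rows of `ν` with index `≥ m` so that the
result is a Young diagram for every `m`. -/
def consCol (m : ℕ) (ν : YoungDiagram) : YoungDiagram where
  cells := range m ×ˢ {0} ∪ (ν.cells.filter (·.1 < m)).image fun c => (c.1, c.2 + 1)
  isLowerSet := by
    rintro ⟨i, c⟩ ⟨i', c'⟩ ⟨hi, hc⟩ h
    simp only [coe_union, coe_product, coe_range, coe_singleton, coe_image, coe_filter,
      Set.mem_union, Set.mem_prod, Set.mem_Iio, Set.mem_singleton_iff, Set.mem_image,
      Set.mem_ofPred_eq, mem_cells, Prod.mk.injEq, Prod.exists] at h ⊢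
    dsimp only at hi hc
    rcases h with ⟨hi, rfl⟩ | ⟨a, b, ⟨hab, ha⟩, rfl, rfl⟩
    · exact .inl ⟨by omega, by omega⟩
    · rcases c' with _ | c'
      · exact .inl ⟨by omega, rfl⟩
      · exact .inr ⟨i', c', ⟨ν.up_left_mem hi (by omega) hab, by omega⟩, rfl, rfl⟩

@[simp]
lemma mk_zero_mem_consCol {m i : ℕ} {ν : YoungDiagram} : (i, 0) ∈ consCol m ν ↔ i < m := by
  simp [consCol, ← mem_cells]

@[simp]
lemma mk_succ_mem_consCol {m i c : ℕ} {ν : YoungDiagram} :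
    (i, c + 1) ∈ consCol m ν ↔ i < m ∧ (i, c) ∈ ν := by
  simp [consCol, ← mem_cells, and_comm]

lemma colLen_consCol (m : ℕ) (ν : YoungDiagram) : (consCol m ν).colLen 0 = m :=
  eq_of_forall_lt_iff fun i => by rw [← mem_iff_lt_colLen, mk_zero_mem_consCol]

lemma card_consCol {m : ℕ} {ν : YoungDiagram} (h : ∀ c ∈ ν, c.1 < m) :
    (consCol m ν).card = ν.card + m := by
  rw [YoungDiagram.card, consCol, card_union_of_disjoint, card_image_of_injective, card_product,
    filter_true_of_mem fun c hc => h c ((mem_cells c).1 hc)]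
  · simp [add_comm]
  · intro a b hab
    simp_all [Prod.ext_iff]
  · simp [disjoint_left]

lemma dropCol_consCol {m : ℕ} {ν : YoungDiagram} (h : ∀ c ∈ ν, c.1 < m) :
    (consCol m ν).dropCol = ν := by
  ext c
  simpa using h c

lemma consCol_dropCol (μ : YoungDiagram) : consCol (μ.colLen 0) μ.dropCol = μ := by
  ext ⟨i, _ | c⟩
  · simp [← mem_iff_lt_colLen]
  · simpa using lt_colLen_zero

lemma card_dropCol (μ : YoungDiagram) : μ.dropCol.card + μ.colLen 0 = μ.card := by
  conv_rhs => rw [← consCol_dropCol μ]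
  exact (card_consCol fun c hc => lt_colLen_zero (mem_dropCol.1 hc)).symm

def FitsIn (μ : YoungDiagram) (k j : ℕ) : Prop := ∀ c ∈ μ, c.1 < k ∧ c.2 < j

lemma FitsIn.cells_subset {μ : YoungDiagram} {k j : ℕ} (h : μ.FitsIn k j) :
    μ.cells ⊆ range k ×ˢ range j := fun c hc => by
  simpa using h c ((mem_cells c).1 hc)

lemma FitsIn.card_le {μ : YoungDiagram} {k j : ℕ} (h : μ.FitsIn k j) : μ.card ≤ k * j := by
  simpa using card_le_card h.cells_subset

lemma FitsIn.colLen_zero_le {μ : YoungDiagram} {k j : ℕ} (h : μ.FitsIn k j) : μ.colLen 0 ≤ k :=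
  not_lt.1 fun hk => (h _ (mem_iff_lt_colLen.2 hk)).1.false

lemma fitsIn_iff_colLen_zero_ne {μ : YoungDiagram} {k j : ℕ} :
    μ.FitsIn k j ↔ μ.FitsIn (k + 1) j ∧ μ.colLen 0 ≠ k + 1 := by
  refine ⟨fun h => ⟨fun c hc => ⟨Nat.lt_succ_of_lt (h c hc).1, (h c hc).2⟩, ?_⟩,
    fun ⟨h, hk⟩ c hc => ⟨?_, (h c hc).2⟩⟩
  · have := h.colLen_zero_le
    omega
  · have := lt_colLen_zero (i := c.1) (j := c.2) hc
    have := h.colLen_zero_le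
    omega

lemma FitsIn.consCol {ν : YoungDiagram} {m j : ℕ} (h : ν.FitsIn m j) :
    (consCol m ν).FitsIn m (j + 1) := by
  rintro ⟨i, _ | c⟩ hc
  · simpa using hc
  · rw [mk_succ_mem_consCol] at hc
    exact ⟨hc.1, by simpa using (h _ hc.2).2⟩

lemma FitsIn.dropCol {μ : YoungDiagram} {m j : ℕ} (h : μ.FitsIn m (j + 1)) :
    μ.dropCol.FitsIn m j := fun c hc => by
  simpa using h _ (mem_dropCol.1 hc)

instance (k j n : ℕ) : Finite {μ : YoungDiagram // μ.card = n ∧ μ.FitsIn k j} :=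
  Finite.of_injective
    (fun μ => (⟨μ.1.cells, mem_powerset.2 μ.2.2.cells_subset⟩ : (range k ×ˢ range j).powerset))
    fun _ _ h => Subtype.ext (YoungDiagram.ext (congrArg Subtype.val h))

noncomputable def consColEquiv (m j n : ℕ) :
    {ν : YoungDiagram // ν.card = n ∧ ν.FitsIn m j} ≃
      {μ : YoungDiagram // μ.card = n + m ∧ μ.FitsIn m (j + 1) ∧ μ.colLen 0 = m} where
  toFun ν := ⟨consCol m ν, by rw [card_consCol fun c hc => (ν.2.2 c hc).1, ν.2.1],
    ν.2.2.consCol, colLen_consCol m ν⟩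
  invFun μ := ⟨μ.1.dropCol, by have := card_dropCol μ.1; omega, μ.2.2.1.dropCol⟩
  left_inv ν := Subtype.ext (dropCol_consCol fun c hc => (ν.2.2 c hc).1)
  right_inv μ := Subtype.ext (by simpa [μ.2.2.2] using consCol_dropCol μ.1)

lemma card_colLen_zero_eq_of_lt {m j n : ℕ} (h : n < m) :
    Nat.card {μ : YoungDiagram // μ.card = n ∧ μ.FitsIn m j ∧ μ.colLen 0 = m} = 0 :=
  Nat.card_eq_zero.2 (.inl ⟨fun ⟨μ, hn, _, hm⟩ => by have := card_dropCol μ; omega⟩)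

end YoungDiagram

open YoungDiagram

lemma pFit_eq_card (k j n : ℕ) :
    pFit k j n = Nat.card {μ : YoungDiagram // μ.card = n ∧ μ.FitsIn k j} := rfl

lemma pFit_size_zero (k j : ℕ) : pFit k j 0 = 1 := by
  rw [pFit_eq_card, Nat.card_eq_one_iff_unique]
  refine ⟨⟨fun μ ν => Subtype.ext ?_⟩, ⟨⟨⊥, by simp [FitsIn]⟩⟩⟩
  rw [YoungDiagram.card_eq_zero.1 μ.2.1, YoungDiagram.card_eq_zero.1 ν.2.1]

lemma pFit_succ_left (k j n : ℕ) :
    pFit (k + 1) j n = pFit k j n +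
      Nat.card {μ : YoungDiagram // μ.card = n ∧ μ.FitsIn (k + 1) j ∧ μ.colLen 0 = k + 1} := by
  rw [pFit_eq_card, pFit_eq_card,
    card_eq_card_and_add_card_and_not _ fun μ => μ.colLen 0 = k + 1, add_comm]
  congr 1
  · exact Nat.card_congr (Equiv.subtypeEquivRight fun μ => by
      rw [fitsIn_iff_colLen_zero_ne (k := k), and_assoc])
  · exact Nat.card_congr (Equiv.subtypeEquivRight fun μ => by rw [and_assoc])

lemma coeff_gaussBinom (k j n : ℕ) : (gaussBinom k j).coeff n = pFit k j n := by
  simp only [gaussBinom, finsetSum_coeff, coeff_C_mul, coeff_X_pow, mul_ite, mul_one, mul_zero,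
    sum_ite_eq, mem_range, Nat.lt_succ_iff]
  split_ifs with h
  · rfl
  · rw [pFit_eq_card, Nat.card_eq_zero.2 (.inl ⟨fun ⟨_, hn, hfit⟩ => h (hn ▸ hfit.card_le)⟩)]
    simp

lemma gaussBinom_ne_zero (k j : ℕ) : gaussBinom k j ≠ 0 := fun h => by
  simpa [coeff_gaussBinom, pFit_size_zero] using congrArg (coeff · 0) h

lemma gaussBinom_zero_left (j : ℕ) : gaussBinom 0 j = 1 := by
  simp [gaussBinom, pFit_size_zero]

lemma gaussBinom_zero_right (k : ℕ) : gaussBinom k 0 = 1 := by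
  simp [gaussBinom, pFit_size_zero]

lemma gaussBinom_succ_succ (k j : ℕ) :
    gaussBinom (k + 1) (j + 1) = gaussBinom k (j + 1) + X ^ (k + 1) * gaussBinom (k + 1) j := by
  ext n
  rw [coeff_add, coeff_X_pow_mul', coeff_gaussBinom, coeff_gaussBinom, pFit_succ_left]
  split_ifs with h
  · obtain ⟨n, rfl⟩ := Nat.exists_eq_add_of_le' h
    rw [← Nat.card_congr (consColEquiv (k + 1) j n), Nat.add_sub_cancel, coeff_gaussBinom,
      pFit_eq_card]
    push_cast
    rfl
  · rw [card_colLen_zero_eq_of_lt (not_le.1 h)]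
    simp

/-- `qPochhammer j k` is `(q^(j+1); q)_k`. -/
noncomputable def qPochhammer (j k : ℕ) : ℤ[X] :=
  ∏ i ∈ range k, (1 - X ^ (j + i + 1))

lemma qPochhammer_succ (j k : ℕ) :
    qPochhammer j (k + 1) = qPochhammer j k * (1 - X ^ (j + k + 1)) :=
  prod_range_succ _ k

lemma qPochhammer_succ' (j k : ℕ) :
    qPochhammer j (k + 1) = (1 - X ^ (j + 1)) * qPochhammer (j + 1) k := by
  rw [qPochhammer, prod_range_succ', mul_comm]
  simp only [qPochhammer, add_assoc, add_comm 1, add_zero]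

lemma gaussBinom_mul_qPochhammer (k j : ℕ) :
    gaussBinom k j * qPochhammer 0 k = qPochhammer j k := by
  induction k generalizing j with
  | zero => simp [gaussBinom_zero_left, qPochhammer]
  | succ k ihk =>
    induction j with
    | zero => simp [gaussBinom_zero_right]
    | succ j ihj =>
      rw [gaussBinom_succ_succ, add_mul, qPochhammer_succ 0 k, ← mul_assoc, ihk, mul_assoc,
        ← qPochhammer_succ, ihj, qPochhammer_succ', qPochhammer_succ]
      ring

lemma one_sub_X_pow_ne_zero {R : Type*} [CommRing R] [Nontrivial R] {m : ℕ} (hm : m ≠ 0) :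
    (1 - X ^ m : R[X]) ≠ 0 := fun h => by
  simpa [hm] using congrArg (eval 0) h

lemma rootMultiplicity_neg_one_one_sub_X_pow {R : Type*} [CommRing R] [IsDomain R] [CharZero R]
    {m : ℕ} (hm : m ≠ 0) :
    (1 - X ^ m : R[X]).rootMultiplicity (-1) = if Even m then 1 else 0 := by
  split_ifs with h
  · have hfactor : (1 - X ^ m : R[X]) = (X - C (-1)) * ∑ i ∈ range m, (-X) ^ i := by
      rw [mul_comm, map_neg, map_one, sub_neg_eq_add, ← neg_neg (X + 1), mul_neg, neg_add',
        geom_sum_mul, h.neg_pow, neg_sub]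
    have hsum : ¬ (∑ i ∈ range m, (-X) ^ i : R[X]).IsRoot (-1) := by
      simp [eval_finsetSum, hm]
    rw [hfactor, rootMultiplicity_mul (hfactor ▸ one_sub_X_pow_ne_zero hm),
      rootMultiplicity_X_sub_C_self, rootMultiplicity_eq_zero hsum]
  · refine rootMultiplicity_eq_zero ?_
    simp [(Nat.not_even_iff_odd.1 h).neg_one_pow]

lemma qPochhammer_ne_zero (j k : ℕ) : qPochhammer j k ≠ 0 :=
  prod_ne_zero_iff.2 fun _ _ => one_sub_X_pow_ne_zero (Nat.succ_ne_zero _)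

lemma rootMultiplicity_neg_one_qPochhammer (j k : ℕ) :
    (qPochhammer j k).rootMultiplicity (-1) = (j + k) / 2 - j / 2 := by
  induction k with
  | zero => simp [qPochhammer]
  | succ k ih =>
    rw [qPochhammer_succ, rootMultiplicity_mul
      (mul_ne_zero (qPochhammer_ne_zero j k) (one_sub_X_pow_ne_zero (Nat.succ_ne_zero _))), ih,
      rootMultiplicity_neg_one_one_sub_X_pow (Nat.succ_ne_zero _)]
    split_ifs with h <;> rw [Nat.even_iff] at h <;> omega

lemma rootMultiplicity_neg_one_gaussBinom (k j : ℕ) :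
    (gaussBinom k j).rootMultiplicity (-1) = (k + j) / 2 - k / 2 - j / 2 := by
  have h := congrArg (rootMultiplicity (-1)) (gaussBinom_mul_qPochhammer k j)
  rw [rootMultiplicity_mul (mul_ne_zero (gaussBinom_ne_zero k j) (qPochhammer_ne_zero 0 k)),
    rootMultiplicity_neg_one_qPochhammer, rootMultiplicity_neg_one_qPochhammer] at h
  omega

/-- The multiplicity of `(1+q)` in `[k+j choose k]_q` is `⌊(k+j)/2⌋ − ⌊k/2⌋ − ⌊j/2⌋`;
in particular `[k+j choose k]_{q=−1} ≠ 0` iff `k` and `j` are not both odd. -/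
theorem stmt17 (k j : ℕ) :
    (gaussBinom k j).rootMultiplicity (-1) = (k + j) / 2 - k / 2 - j / 2 ∧
    ((gaussBinom k j).eval (-1) ≠ 0 ↔ ¬ (Odd k ∧ Odd j)) := by
  refine ⟨rootMultiplicity_neg_one_gaussBinom k j, ?_⟩
  rw [Ne, ← IsRoot.def, ← rootMultiplicity_pos (gaussBinom_ne_zero k j),
    rootMultiplicity_neg_one_gaussBinom, Nat.odd_iff, Nat.odd_iff]
  omega
end
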